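/- arXiv:2401.06170 — 5 statements merged into one kernel-verified Lean document; each statement's English description precedes it below -/
import Mathlib

section
/- Let G be a group and let a, a', b, b', c, c', d, d' be elements of G, each of which squares to the identity, with b = b'. Write ⟨x,y⟩ = e for the braid relation x·y·x = y·x·y (equivalently, triviality of the triple commutator x·y·x·y⁻¹·x⁻¹·y⁻¹) and [x,y] = e for x·y = y·x. Assume: ⟨a',b⟩ = ⟨a',b'⟩ = ⟨a', b⁻¹·b'·b⟩ = e; ⟨c,d⟩ = ⟨c',d⟩ = ⟨c⁻¹·c'·c, d⟩ = e; [b'·b·a'·b⁻¹·b'⁻¹, d] = e; [b'·b·a'·b⁻¹·b'⁻¹, c⁻¹·c'⁻¹·d⁻¹·d'·d·c'·c] = e; ⟨a,b⟩ = ⟨a,b'⟩ = ⟨a, b⁻¹·b'·b⟩ = e; ⟨c, d⁻¹·d'·d⟩ = ⟨c', d⁻¹·d'·d⟩ = ⟨c⁻¹·c'·c, d⁻¹·d'·d⟩ = e; [b'·b·a·b⁻¹·b'⁻¹, d⁻¹·d'·d] = e; [b'·b·a·b⁻¹·b'⁻¹, c⁻¹·c'⁻¹·d⁻¹·d'⁻¹·d·d'·d·c'·c]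 = e; b'·b·a'·b·a'⁻¹·b⁻¹·b'⁻¹ = d·c'·d⁻¹; b'·b·a'·b'·a'⁻¹·b⁻¹·b'⁻¹ = d·c'·c·c'⁻¹·d⁻¹; b'·b·a·b·a⁻¹·b⁻¹·b'⁻¹ = d⁻¹·d'·d·c'·d⁻¹·d'⁻¹·d; b'·b·a·b'·a⁻¹·b⁻¹·b'⁻¹ = d⁻¹·d'·d·c'·c·c'⁻¹·d⁻¹·d'⁻¹·d. Then: c = c'; ⟨a,b⟩ = e; ⟨b,d⟩ = e; ⟨d,c⟩ = e; ⟨c,a⟩ = e; [b,c] = e; [a,d] = e; a' = b·d·c·d·b; and d' = d·c·a·b·a·c·d. -/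
/-- The braid relation `⟨x,y⟩ = e`, i.e. `x·y·x = y·x·y`. -/
def braid {G : Type*} [Group G] (x y : G) : Prop := x * y * x = y * x * y

/-- Lemma 3.1 of the paper: the relations (1.1)–(1.12) of a point where four
lines `a < b < c < d` meet, in the quotient where every generator squares to the
identity, together with `b = b'`, imply `c = c'` and the simplified relations
(4.1)–(4.2). -/
theorem stmt1 {G : Type*} [Group G] (a a' b b' c c' d d' : G)
    (ha2 : a ^ 2 = 1) (ha'2 : a' ^ 2 = 1) (hb2 : b ^ 2 = 1) (hb'2 : b' ^ 2 = 1)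
    (hc2 : c ^ 2 = 1) (hc'2 : c' ^ 2 = 1) (hd2 : d ^ 2 = 1) (hd'2 : d' ^ 2 = 1)
    (hbb' : b = b')
    (h1a : braid a' b) (h1b : braid a' b') (h1c : braid a' (b⁻¹ * b' * b))
    (h2a : braid c d) (h2b : braid c' d) (h2c : braid (c⁻¹ * c' * c) d)
    (h3 : (b' * b * a' * b⁻¹ * b'⁻¹) * d = d * (b' * b * a' * b⁻¹ * b'⁻¹))
    (h4 : (b' * b * a' * b⁻¹ * b'⁻¹) * (c⁻¹ * c'⁻¹ * d⁻¹ * d' * d * c' * c)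
        = (c⁻¹ * c'⁻¹ * d⁻¹ * d' * d * c' * c) * (b' * b * a' * b⁻¹ * b'⁻¹))
    (h5a : braid a b) (h5b : braid a b') (h5c : braid a (b⁻¹ * b' * b))
    (h6a : braid c (d⁻¹ * d' * d)) (h6b : braid c' (d⁻¹ * d' * d))
    (h6c : braid (c⁻¹ * c' * c) (d⁻¹ * d' * d))
    (h7 : (b' * b * a * b⁻¹ * b'⁻¹) * (d⁻¹ * d' * d)
        = (d⁻¹ * d' * d) * (b' * b * a * b⁻¹ * b'⁻¹))
    (h8 : (b' * b * a * b⁻¹ * b'⁻¹) * (c⁻¹ * c'⁻¹ * d⁻¹ * d'⁻¹ * d * d' * d * c' * c)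
        = (c⁻¹ * c'⁻¹ * d⁻¹ * d'⁻¹ * d * d' * d * c' * c) * (b' * b * a * b⁻¹ * b'⁻¹))
    (h9 : b' * b * a' * b * a'⁻¹ * b⁻¹ * b'⁻¹ = d * c' * d⁻¹)
    (h10 : b' * b * a' * b' * a'⁻¹ * b⁻¹ * b'⁻¹ = d * c' * c * c'⁻¹ * d⁻¹)
    (h11 : b' * b * a * b * a⁻¹ * b⁻¹ * b'⁻¹ = d⁻¹ * d' * d * c' * d⁻¹ * d'⁻¹ * d)
    (h12 : b' * b * a * b' * a⁻¹ * b⁻¹ * b'⁻¹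
        = d⁻¹ * d' * d * c' * c * c'⁻¹ * d⁻¹ * d'⁻¹ * d) :
    c = c' ∧ braid a b ∧ braid b d ∧ braid d c ∧ braid c a ∧
      b * c = c * b ∧ a * d = d * a ∧
      a' = b * d * c * d * b ∧ d' = d * c * a * b * a * c * d := by

  subst hbb'
  have ha : a * a = 1 := by rw [← pow_two]; exact ha2
  have ha' : a' * a' = 1 := by rw [← pow_two]; exact ha'2
  have hb : b * b = 1 := by rw [← pow_two]; exact hb2
  have hc : c * c = 1 := by rw [← pow_two]; exact hc2
  have hc' : c' * c' = 1 := by rw [← pow_two]; exact hc'2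
  have hd : d * d = 1 := by rw [← pow_two]; exact hd2
  have hd' : d' * d' = 1 := by rw [← pow_two]; exact hd'2
  have hai : a⁻¹ = a := inv_eq_of_mul_eq_one_right ha
  have hai' : a'⁻¹ = a' := inv_eq_of_mul_eq_one_right ha'
  have hbi : b⁻¹ = b := inv_eq_of_mul_eq_one_right hb
  have hci : c⁻¹ = c := inv_eq_of_mul_eq_one_right hc
  have hci' : c'⁻¹ = c' := inv_eq_of_mul_eq_one_right hc'
  have hdi : d⁻¹ = d := inv_eq_of_mul_eq_one_right hd
  have hdi' : d'⁻¹ = d' := inv_eq_of_mul_eq_one_right hd'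
  have haL : ∀ w : G, a * (a * w) = w := fun w => by rw [← mul_assoc, ha, one_mul]
  have ha'L : ∀ w : G, a' * (a' * w) = w := fun w => by rw [← mul_assoc, ha', one_mul]
  have hbL : ∀ w : G, b * (b * w) = w := fun w => by rw [← mul_assoc, hb, one_mul]
  have hcL : ∀ w : G, c * (c * w) = w := fun w => by rw [← mul_assoc, hc, one_mul]
  have hc'L : ∀ w : G, c' * (c' * w) = w := fun w => by rw [← mul_assoc, hc', one_mul]
  have hdL : ∀ w : G, d * (d * w) = w := fun w => by rw [← mul_assoc, hd, one_mul]
  have hd'L : ∀ w : G, d' * (d' * w) = w := fun w => by rw [← mul_assoc, hd', one_mul]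
  simp only [braid] at h1a h2a h5a h6a
  simp only [hai, hai', hbi, hci, hci', hdi, hdi'] at h3 h6a h7 h8 h9 h10 h11
  simp only [mul_assoc] at h1a h2a h5a h6a h3 h7 h8 h9 h10 h11
  simp only [haL, ha'L, hbL, hcL, hc'L, hdL, hd'L, ha, ha', hb, hc, hc', hd, hd',
    one_mul, mul_one] at h3 h7 h8 h9 h10 h11
  -- c = c'
  have e1 : d * (c' * d) = d * (c' * (c * (c' * d))) := by rw [← h9]; exact h10
  have e2 : d = c * (c' * d) := mul_left_cancel (mul_left_cancel e1)
  have e3 : c * d = c' * d := by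
    calc c * d = c * (c * (c' * d)) := by rw [← e2]
      _ = c' * d := hcL _
  have hcc' : c = c' := mul_right_cancel e3
  subst hcc'
  simp only [haL, hbL, hcL, hdL, hd'L, ha, hb, hc, hd, hd', one_mul, mul_one] at h8
  -- h8 : a*(d*(d'*(d*(d'*d)))) = d*(d'*(d*(d'*(d*a))))
  -- commutation of a and d
  have tw : d * (d' * (d * (a * (d' * d)))) = d * (d' * (d * (d' * (d * a)))) := by
    calc d * (d' * (d * (a * (d' * d)))) = (d * (d' * (d * a))) * (d' * d) := by group
      _ = (a * (d * (d' * d))) * (d' * d) := by rw [← h7]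
      _ = a * (d * (d' * (d * (d' * d)))) := by group
      _ = d * (d' * (d * (d' * (d * a)))) := h8
  have had'd : a * (d' * d) = d' * (d * a) :=
    mul_left_cancel (mul_left_cancel (mul_left_cancel tw))
  have t2 : (a * d) * (d' * d) = (d * a) * (d' * d) := by
    calc (a * d) * (d' * d) = a * (d * (d' * d)) := by group
      _ = d * (d' * (d * a)) := h7
      _ = d * (a * (d' * d)) := by rw [had'd]
      _ = (d * a) * (d' * d) := by group
  have HAD : a * d = d * a := mul_right_cancel t2
  -- y = d d' d equals c aba c
  have F4' : a * (b * a) = c * (d * (d' * (d * c))) := by rw [h11, ← h6a]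
  have hyc : c * (a * (b * (a * c))) = d * (d' * d) := by
    calc c * (a * (b * (a * c))) = c * ((a * (b * a)) * c) := by group
      _ = c * ((c * (d * (d' * (d * c)))) * c) := by rw [F4']
      _ = d * (d' * d) := by
          simp only [mul_assoc, hcL, hdL, hd'L, hc, hd, hd', one_mul, mul_one]
  have hd'eq : d' = d * (c * (a * (b * (a * (c * d))))) := by
    calc d' = d * ((d * (d' * d)) * d) := by
          simp only [mul_assoc, hdL, hd, one_mul, mul_one]
      _ = d * ((c * (a * (b * (a * c)))) * d) := by rw [hyc]
      _ = d * (c * (a * (b * (a * (c * d))))) := by group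
  -- A4 : aba * c * aba = d d' d
  have A4 : (a * (b * a)) * (c * (a * (b * a))) = d * (d' * d) := by
    rw [F4']
    simp only [mul_assoc, hcL, hdL, hd'L, hc, hd, hd', one_mul, mul_one]
    rw [h6a]
    simp only [mul_assoc, hcL, hdL, hd'L, hc, hd, hd', one_mul, mul_one]
  have hycomm : a * (d * (d' * d)) = (d * (d' * d)) * a := by rw [h7]; group
  -- K
  have K : b * (a * (c * (a * (b * a)))) = a * (b * (a * (c * (a * b)))) := by
    have t := hycomm
    rw [← A4] at t
    simp only [mul_assoc, haL, hbL, hcL, ha, hb, hc, one_mul, mul_one] at t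
    exact t
  have HABABA : ∀ w : G, a * (b * (a * (b * (a * w)))) = b * w := fun w => by
    calc a * (b * (a * (b * (a * w)))) = ((a * (b * a)) * (b * a)) * w := by group
      _ = ((b * (a * b)) * (b * a)) * w := by rw [h5a]
      _ = b * w := by simp only [mul_assoc, haL, hbL, ha, hb, one_mul, mul_one]
  have HBABA : ∀ w : G, b * (a * (b * (a * w))) = a * (b * w) := fun w => by
    calc b * (a * (b * (a * w))) = (b * (a * b)) * (a * w) := by group
      _ = (a * (b * a)) * (a * w) := by rw [← h5a]
      _ = a * (b * w) := by simp only [mul_assoc, haL, hbL, ha, hb, one_mul, mul_one]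
  have L : c * (a * (b * a)) = b * (c * (a * b)) := by
    have t := congrArg (fun w => a * (b * w)) K
    simp only [mul_assoc, haL, hbL, ha, hb, one_mul, mul_one] at t
    rw [HABABA] at t
    exact t
  have HBC : b * c = c * b := by
    have t := congrArg (fun w => c * w) L
    simp only [mul_assoc, haL, hbL, hcL, ha, hb, hc, one_mul, mul_one] at t
    rw [h5a] at t
    have t2 : b * (a * b) = (c * (b * c)) * (a * b) := by rw [t]; group
    have t3 : b = c * (b * c) := mul_right_cancel t2
    calc b * c = (c * (b * c)) * c := by rw [← t3]
      _ = c * b := by simp only [mul_assoc, hcL, hc, one_mul, mul_one]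
  have HBCL : ∀ w : G, c * (b * w) = b * (c * w) := fun w => by
    rw [← mul_assoc, ← HBC, mul_assoc]
  have H2L : ∀ w : G, c * (d * (c * w)) = d * (c * (d * w)) := fun w => by
    calc c * (d * (c * w)) = (c * (d * c)) * w := by group
      _ = (d * (c * d)) * w := by rw [h2a]
      _ = d * (c * (d * w)) := by group
  -- braid b d
  have Hba'b : b * (a' * b) = d * (c * d) := by rw [← h1a]; exact h9
  have Ea' : a' = b * (d * (c * (d * b))) := by
    calc a' = b * ((b * (a' * b)) * b) := by
          simp only [mul_assoc, hbL, hb, one_mul, mul_one]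
      _ = b * ((d * (c * d)) * b) := by rw [Hba'b]
      _ = b * (d * (c * (d * b))) := by group
  have A3'' : d * (c * (d * (b * (d * (c * d))))) = b * (d * (c * (d * b))) := by
    have t := h9
    rw [Ea'] at t
    simp only [mul_assoc, hbL, hcL, hdL, hb, hc, hd, one_mul, mul_one] at t
    have t2 := congrArg (fun w => b * (w * b)) t
    simp only [mul_assoc, hbL, hcL, hdL, hb, hc, hd, one_mul, mul_one] at t2
    exact t2
  have HN : c * (d * (b * (d * c))) = b * (d * (c * (d * b))) := by
    have t := h3
    rw [Ea'] at t
    have t2 : d * ((b * (d * (c * (d * b)))) * d) = b * (d * (c * (d * b))) := by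
      calc d * ((b * (d * (c * (d * b)))) * d)
          = d * (d * (b * (d * (c * (d * b))))) := by rw [t]
        _ = b * (d * (c * (d * b))) := hdL _
    rw [← A3''] at t2
    simp only [mul_assoc, hbL, hcL, hdL, hb, hc, hd, one_mul, mul_one] at t2
    rw [A3''] at t2
    exact t2
  have HBD : d * (b * d) = b * (d * b) := by
    have t := congrArg (fun w => c * w) HN
    simp only [mul_assoc, hbL, hcL, hdL, hb, hc, hd, one_mul, mul_one] at t
    rw [HBCL, H2L] at t
    simp only [mul_assoc, hbL, hcL, hdL, hb, hc, hd, one_mul, mul_one] at t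
    rw [← HBC] at t
    have t2 : (d * (b * d)) * c = (b * (d * b)) * c := by
      calc (d * (b * d)) * c = d * (b * (d * c)) := by group
        _ = b * (d * (b * c)) := t
        _ = (b * (d * b)) * c := by group
    exact mul_right_cancel t2
  -- braid c a
  have M : b * (a * (c * (a * b))) = c * (a * (b * (a * c))) := by
    calc b * (a * (c * (a * b)))
        = a * (((a * (b * a)) * (c * (a * (b * a)))) * a) := by
          simp only [mul_assoc, haL, hbL, hcL, ha, hb, hc, one_mul, mul_one]
      _ = a * ((d * (d' * d)) * a) := by rw [A4]
      _ = a * (a * (d * (d' * d))) := by rw [← hycomm]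
      _ = d * (d' * d) := haL _
      _ = c * (a * (b * (a * c))) := hyc.symm
  have HCA : a * (c * a) = c * (a * c) := by
    have t := congrArg (fun w => b * w) M
    simp only [mul_assoc, haL, hbL, hcL, ha, hb, hc, one_mul, mul_one] at t
    rw [← HBCL, HBABA, HBC] at t
    have t2 : (a * (c * a)) * b = (c * (a * c)) * b := by
      calc (a * (c * a)) * b = a * (c * (a * b)) := by group
        _ = c * (a * (c * b)) := t
        _ = (c * (a * c)) * b := by group
    exact mul_right_cancel t2
  refine ⟨rfl, ?_, ?_, ?_, ?_, HBC, HAD, ?_, ?_⟩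
  · show a * b * a = b * a * b
    rw [mul_assoc, mul_assoc]; exact h5a
  · show b * d * b = d * b * d
    rw [mul_assoc, mul_assoc]; exact HBD.symm
  · show d * c * d = c * d * c
    rw [mul_assoc, mul_assoc]; exact h2a.symm
  · show c * a * c = a * c * a
    rw [mul_assoc, mul_assoc]; exact HCA.symm
  · simp only [mul_assoc]; exact Ea'
  · simp only [mul_assoc]; exact hd'eq
end

section
/- Let G be a group and let x₁, x₁', x₂, x₂', x₃, x₃', x₄, x₄' be elements of G, each of which squares to the identity. Write ⟨x,y⟩ = e for the braid relation x·y·x = y·x·y and [x,y] = e for x·y = y·x. Assume the R₄ relations: ⟨x₁',x₂⟩ = ⟨x₁',x₂'⟩ = ⟨x₁', x₂·x₂'·x₂⟩ = e; x₁ = x₂'·x₂·x₁'·x₂·x₂'; ⟨x₂'·x₂·x₁'·x₂·x₁'·x₂·x₂', x₃⟩ = ⟨x₂'·x₂·x₁'·x₂'·x₁'·x₂·x₂', x₃⟩ = ⟨x₂'·x₂·x₁'·x₂·x₂'·x₂·x₁'·x₂·x₂', x₃⟩ = e; x₃' = x₃·x₂'·x₂·x₁'·x₂'·x₂·x₁'·x₂·x₂'·x₃·x₂'·x₂·x₁'·x₂·x₂'·x₁'·x₂·x₂'·x₃;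 [x₁,x₃] = [x₁,x₃'] = [x₁',x₃] = [x₁',x₃'] = e; and additionally: [x₁, x₄·x₃·x₄] = [x₁, x₄·x₃'·x₄] = [x₁', x₄·x₃·x₄] = [x₁', x₄·x₃'·x₄] = e; ⟨x₃,x₄⟩ = ⟨x₃',x₄⟩ = ⟨x₃·x₃'·x₃, x₄⟩ = e; [x₂'·x₂·x₁·x₂·x₂', x₄] = [x₂'·x₂·x₁'·x₂·x₂', x₄] = e; [x₂,x₄] = [x₂',x₄] = e; [x₃'·x₃·x₂'·x₂·x₁·x₂·x₂'·x₃·x₃', x₄·x₄'·x₄] = [x₃'·x₃·x₂'·x₂·x₁'·x₂·x₂'·x₃·x₃', x₄·x₄'·x₄] = e; [x₃'·x₃·x₂·x₃·x₃', x₄·x₄'·x₄] = [x₃'·x₃·x₂'·x₃·x₃', x₄·x₄'·x₄] = e; x₄·x₄'·x₄ = x₃'·x₃·x₄'·x₃·x₃'. Then: ⟨x₁',x₂⟩ = ⟨x₁',x₂'⟩ = ⟨x₁', x₂·x₂'·x₂⟩ = e; ⟨x₂',x₃⟩ = ⟨x₃, x₂'·x₂·x₂'·x₁'·x₂'·x₂·x₂'⟩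 = ⟨x₂,x₃⟩ = e; ⟨x₃,x₄⟩ = ⟨x₃',x₄⟩ = e; x₁ = x₂'·x₂·x₁'·x₂·x₂'; x₃·x₃'·x₃ = x₂'·x₂·x₃·x₂·x₂'; x₄·x₄'·x₄ = x₃'·x₃·x₄'·x₃·x₃'; [x₁,x₃] = [x₁,x₃'] = [x₁',x₃] = [x₁',x₃'] = e; and [x₁,x₄] = [x₁',x₄] = [x₂,x₄] = [x₂',x₄] = e. -/
/-- The `R₅` case of Lemma 2.2 of the paper: the relations (1.17) contributed
by a Zappatic singularity of type `R₅`, together with the `R₄` relations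
(5.1)–(5.5), in the quotient where every generator squares to the identity,
simplify to the stated list (1.18). -/
theorem stmt6 {G : Type*} [Group G] (x₁ x₁' x₂ x₂' x₃ x₃' x₄ x₄' : G)
    (h1 : x₁ ^ 2 = 1) (h1' : x₁' ^ 2 = 1) (h2 : x₂ ^ 2 = 1) (h2' : x₂' ^ 2 = 1)
    (h3 : x₃ ^ 2 = 1) (h3' : x₃' ^ 2 = 1) (h4 : x₄ ^ 2 = 1) (h4' : x₄' ^ 2 = 1)
    -- the R₄ relations (5.1)–(5.5)
    (r1a : braid x₁' x₂) (r1b : braid x₁' x₂') (r1c : braid x₁' (x₂ * x₂' * x₂))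
    (r2 : x₁ = x₂' * x₂ * x₁' * x₂ * x₂')
    (r3a : braid (x₂' * x₂ * x₁' * x₂ * x₁' * x₂ * x₂') x₃)
    (r3b : braid (x₂' * x₂ * x₁' * x₂' * x₁' * x₂ * x₂') x₃)
    (r3c : braid (x₂' * x₂ * x₁' * x₂ * x₂' * x₂ * x₁' * x₂ * x₂') x₃)
    (r4 : x₃' = x₃ * x₂' * x₂ * x₁' * x₂' * x₂ * x₁' * x₂ * x₂' * x₃ *
        x₂' * x₂ * x₁' * x₂ * x₂' * x₁' * x₂ * x₂' * x₃)
    (r5a : x₁ * x₃ = x₃ * x₁) (r5b : x₁ * x₃' = x₃' * x₁)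
    (r5c : x₁' * x₃ = x₃ * x₁') (r5d : x₁' * x₃' = x₃' * x₁')
    -- the additional R₅ relations (1.17)
    (s1a : x₁ * (x₄ * x₃ * x₄) = (x₄ * x₃ * x₄) * x₁)
    (s1b : x₁ * (x₄ * x₃' * x₄) = (x₄ * x₃' * x₄) * x₁)
    (s1c : x₁' * (x₄ * x₃ * x₄) = (x₄ * x₃ * x₄) * x₁')
    (s1d : x₁' * (x₄ * x₃' * x₄) = (x₄ * x₃' * x₄) * x₁')
    (s2a : braid x₃ x₄) (s2b : braid x₃' x₄) (s2c : braid (x₃ * x₃' * x₃) x₄)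
    (s3a : (x₂' * x₂ * x₁ * x₂ * x₂') * x₄ = x₄ * (x₂' * x₂ * x₁ * x₂ * x₂'))
    (s3b : (x₂' * x₂ * x₁' * x₂ * x₂') * x₄ = x₄ * (x₂' * x₂ * x₁' * x₂ * x₂'))
    (s4a : x₂ * x₄ = x₄ * x₂) (s4b : x₂' * x₄ = x₄ * x₂')
    (s5a : (x₃' * x₃ * x₂' * x₂ * x₁ * x₂ * x₂' * x₃ * x₃') * (x₄ * x₄' * x₄)
        = (x₄ * x₄' * x₄) * (x₃' * x₃ * x₂' * x₂ * x₁ * x₂ * x₂' * x₃ * x₃'))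
    (s5b : (x₃' * x₃ * x₂' * x₂ * x₁' * x₂ * x₂' * x₃ * x₃') * (x₄ * x₄' * x₄)
        = (x₄ * x₄' * x₄) * (x₃' * x₃ * x₂' * x₂ * x₁' * x₂ * x₂' * x₃ * x₃'))
    (s6a : (x₃' * x₃ * x₂ * x₃ * x₃') * (x₄ * x₄' * x₄)
        = (x₄ * x₄' * x₄) * (x₃' * x₃ * x₂ * x₃ * x₃'))
    (s6b : (x₃' * x₃ * x₂' * x₃ * x₃') * (x₄ * x₄' * x₄)
        = (x₄ * x₄' * x₄) * (x₃' * x₃ * x₂' * x₃ * x₃'))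
    (s7 : x₄ * x₄' * x₄ = x₃' * x₃ * x₄' * x₃ * x₃') :
    (braid x₁' x₂ ∧ braid x₁' x₂' ∧ braid x₁' (x₂ * x₂' * x₂)) ∧
    (braid x₂' x₃ ∧ braid x₃ (x₂' * x₂ * x₂' * x₁' * x₂' * x₂ * x₂') ∧
      braid x₂ x₃) ∧
    (braid x₃ x₄ ∧ braid x₃' x₄) ∧
    (x₁ = x₂' * x₂ * x₁' * x₂ * x₂') ∧
    (x₃ * x₃' * x₃ = x₂' * x₂ * x₃ * x₂ * x₂') ∧
    (x₄ * x₄' * x₄ = x₃' * x₃ * x₄' * x₃ * x₃') ∧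
    (x₁ * x₃ = x₃ * x₁ ∧ x₁ * x₃' = x₃' * x₁ ∧ x₁' * x₃ = x₃ * x₁' ∧
      x₁' * x₃' = x₃' * x₁') ∧
    (x₁ * x₄ = x₄ * x₁ ∧ x₁' * x₄ = x₄ * x₁' ∧ x₂ * x₄ = x₄ * x₂ ∧
      x₂' * x₄ = x₄ * x₂') := by
  rw [pow_two] at h1 h1' h2 h2' h3 h3' h4 h4'
  -- cancellation lemmas
  have n1 : ∀ z : G, x₁ * (x₁ * z) = z := fun z => by rw [← mul_assoc, h1, one_mul]
  have n1' : ∀ z : G, x₁' * (x₁' * z) = z := fun z => by rw [← mul_assoc, h1', one_mul]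
  have n2 : ∀ z : G, x₂ * (x₂ * z) = z := fun z => by rw [← mul_assoc, h2, one_mul]
  have n2' : ∀ z : G, x₂' * (x₂' * z) = z := fun z => by rw [← mul_assoc, h2', one_mul]
  have n3 : ∀ z : G, x₃ * (x₃ * z) = z := fun z => by rw [← mul_assoc, h3, one_mul]
  -- pushed commutation lemmas
  have w1t : ∀ z : G, x₁ * (x₃ * z) = x₃ * (x₁ * z) := fun z => by
    rw [← mul_assoc, r5a, mul_assoc]
  have wat : ∀ z : G, x₁' * (x₃ * z) = x₃ * (x₁' * z) := fun z => by
    rw [← mul_assoc, r5c, mul_assoc]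
  have wbf : ∀ z : G, x₂ * (x₄ * z) = x₄ * (x₂ * z) := fun z => by
    rw [← mul_assoc, s4a, mul_assoc]
  have wb'f : ∀ z : G, x₂' * (x₄ * z) = x₄ * (x₂' * z) := fun z => by
    rw [← mul_assoc, s4b, mul_assoc]
  -- pushed braid lemmas
  have r1a' : x₁' * x₂ * x₁' = x₂ * x₁' * x₂ := r1a
  have r1b' : x₁' * x₂' * x₁' = x₂' * x₁' * x₂' := r1b
  have r1c' : x₁' * (x₂ * x₂' * x₂) * x₁' = (x₂ * x₂' * x₂) * x₁' * (x₂ * x₂' * x₂) := r1c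
  have b1az : ∀ z : G, x₁' * (x₂ * (x₁' * z)) = x₂ * (x₁' * (x₂ * z)) := fun z => by
    have h : (x₁' * x₂ * x₁') * z = (x₂ * x₁' * x₂) * z := by rw [r1a']
    simpa only [mul_assoc] using h
  have b1bz : ∀ z : G, x₁' * (x₂' * (x₁' * z)) = x₂' * (x₁' * (x₂' * z)) := fun z => by
    have h : (x₁' * x₂' * x₁') * z = (x₂' * x₁' * x₂') * z := by rw [r1b']
    simpa only [mul_assoc] using h
  have b1cz : ∀ z : G, x₁' * (x₂ * (x₂' * (x₂ * (x₁' * z))))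
      = x₂ * (x₂' * (x₂ * (x₁' * (x₂ * (x₂' * (x₂ * z)))))) := fun z => by
    have h : (x₁' * (x₂ * x₂' * x₂) * x₁') * z
        = ((x₂ * x₂' * x₂) * x₁' * (x₂ * x₂' * x₂)) * z := by rw [r1c']
    simpa only [mul_assoc] using h
  -- r2 in pushed reverse form
  have r2z : ∀ z : G, x₂' * (x₂ * (x₁' * (x₂ * (x₂' * z)))) = x₁ * z := fun z => by
    rw [r2]; simp only [mul_assoc]
  -- word simplifications of the r3 relations
  have cEqC : x₂' * x₂ * x₁' * x₂ * x₂' * x₂ * x₁' * x₂ * x₂' = x₂ * x₁' * x₂ := by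
    simp only [mul_assoc]
    rw [b1cz]
    simp only [n2, n2', h2', mul_one]
  have cEqA : x₂' * x₂ * x₁' * x₂ * x₁' * x₂ * x₂' = x₂' * x₁' * x₂' := by
    simp only [mul_assoc]
    rw [b1az]
    simp only [n2]
  have cEqB : x₂' * x₂ * x₁' * x₂' * x₁' * x₂ * x₂'
      = x₂' * x₂ * x₂' * x₁' * x₂' * x₂ * x₂' := by
    simp only [mul_assoc]
    rw [b1bz]
  -- braid (x₂ x₁' x₂) x₃ and its consequences
  have hbab : x₂ * x₁' * x₂ * x₃ * (x₂ * x₁' * x₂)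
      = x₃ * (x₂ * x₁' * x₂) * x₃ := by
    have h : x₂' * x₂ * x₁' * x₂ * x₂' * x₂ * x₁' * x₂ * x₂' * x₃ *
        (x₂' * x₂ * x₁' * x₂ * x₂' * x₂ * x₁' * x₂ * x₂')
        = x₃ * (x₂' * x₂ * x₁' * x₂ * x₂' * x₂ * x₁' * x₂ * x₂') * x₃ := r3c
    rw [cEqC] at h
    exact h
  have hbabz : ∀ z : G, x₂ * (x₁' * (x₂ * (x₃ * (x₂ * (x₁' * (x₂ * z))))))
      = x₃ * (x₂ * (x₁' * (x₂ * (x₃ * z)))) := fun z => by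
    have h : (x₂ * x₁' * x₂ * x₃ * (x₂ * x₁' * x₂)) * z
        = (x₃ * (x₂ * x₁' * x₂) * x₃) * z := by rw [hbab]
    simpa only [mul_assoc] using h
  have stepC : ∀ z : G, x₂ * (x₃ * (x₂ * z)) = x₃ * (x₂ * (x₃ * z)) := fun z => by
    have h := hbabz (x₁' * z)
    rw [← b1az, ← b1az, ← b1az, n1', wat, n1', wat, n1', ← wat] at h
    exact mul_left_cancel h
  have g2c : braid x₂ x₃ := by
    have h := stepC 1
    simp only [mul_one] at h
    show x₂ * x₃ * x₂ = x₃ * x₂ * x₃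
    simp only [mul_assoc]
    exact h
  -- braid (x₂' x₁' x₂') x₃ and its consequences
  have hα : x₂' * x₁' * x₂' * x₃ * (x₂' * x₁' * x₂')
      = x₃ * (x₂' * x₁' * x₂') * x₃ := by
    have h : x₂' * x₂ * x₁' * x₂ * x₁' * x₂ * x₂' * x₃ *
        (x₂' * x₂ * x₁' * x₂ * x₁' * x₂ * x₂')
        = x₃ * (x₂' * x₂ * x₁' * x₂ * x₁' * x₂ * x₂') * x₃ := r3a
    rw [cEqA] at h
    exact h
  have hαz : ∀ z : G, x₂' * (x₁' * (x₂' * (x₃ * (x₂' * (x₁' * (x₂' * z))))))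
      = x₃ * (x₂' * (x₁' * (x₂' * (x₃ * z)))) := fun z => by
    have h : (x₂' * x₁' * x₂' * x₃ * (x₂' * x₁' * x₂')) * z
        = (x₃ * (x₂' * x₁' * x₂') * x₃) * z := by rw [hα]
    simpa only [mul_assoc] using h
  have stepA : ∀ z : G, x₂' * (x₃ * (x₂' * z)) = x₃ * (x₂' * (x₃ * z)) := fun z => by
    have h := hαz (x₁' * z)
    rw [← b1bz, ← b1bz, ← b1bz, n1', wat, n1', wat, n1', ← wat] at h
    exact mul_left_cancel h
  have g2a : braid x₂' x₃ := by
    have h := stepA 1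
    simp only [mul_one] at h
    show x₂' * x₃ * x₂' = x₃ * x₂' * x₃
    simp only [mul_assoc]
    exact h
  -- braid x₃ (x₂' x₂ x₂' x₁' x₂' x₂ x₂')
  have g2b : braid x₃ (x₂' * x₂ * x₂' * x₁' * x₂' * x₂ * x₂') := by
    have h : x₂' * x₂ * x₁' * x₂' * x₁' * x₂ * x₂' * x₃ *
        (x₂' * x₂ * x₁' * x₂' * x₁' * x₂ * x₂')
        = x₃ * (x₂' * x₂ * x₁' * x₂' * x₁' * x₂ * x₂') * x₃ := r3b
    rw [cEqB] at h
    exact h.symm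
  -- x₃ x₃' x₃ = x₂' x₂ x₃ x₂ x₂'
  have g5 : x₃ * x₃' * x₃ = x₂' * x₂ * x₃ * x₂ * x₂' := by
    rw [r4]
    simp only [mul_assoc]
    rw [n3]
    simp only [h3, mul_one]
    rw [r2z, r2z, w1t, n1, wat, n1']
  -- [x₁, x₄] = 1
  have s3az : ∀ z : G, x₂' * (x₂ * (x₁ * (x₂ * (x₂' * (x₄ * z)))))
      = x₄ * (x₂' * (x₂ * (x₁ * (x₂ * (x₂' * z))))) := fun z => by
    have h : ((x₂' * x₂ * x₁ * x₂ * x₂') * x₄) * z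
        = (x₄ * (x₂' * x₂ * x₁ * x₂ * x₂')) * z := by rw [s3a]
    simpa only [mul_assoc] using h
  have step8a : ∀ z : G, x₁ * (x₄ * (x₂ * (x₂' * z)))
      = x₄ * (x₁ * (x₂ * (x₂' * z))) := fun z => by
    have h := s3az z
    rw [← wb'f, ← wbf, wb'f, wbf] at h
    exact mul_left_cancel (mul_left_cancel h)
  have g8a : x₁ * x₄ = x₄ * x₁ := by
    have h := step8a (x₂' * (x₂ * 1))
    simp only [mul_one, n2, n2', h2, h2'] at h
    exact h
  have s3bz : ∀ z : G, x₂' * (x₂ * (x₁' * (x₂ * (x₂' * (x₄ * z)))))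
      = x₄ * (x₂' * (x₂ * (x₁' * (x₂ * (x₂' * z))))) := fun z => by
    have h : ((x₂' * x₂ * x₁' * x₂ * x₂') * x₄) * z
        = (x₄ * (x₂' * x₂ * x₁' * x₂ * x₂')) * z := by rw [s3b]
    simpa only [mul_assoc] using h
  have step8b : ∀ z : G, x₁' * (x₄ * (x₂ * (x₂' * z)))
      = x₄ * (x₁' * (x₂ * (x₂' * z))) := fun z => by
    have h := s3bz z
    rw [← wb'f, ← wbf, wb'f, wbf] at h
    exact mul_left_cancel (mul_left_cancel h)
  have g8b : x₁' * x₄ = x₄ * x₁' := by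
    have h := step8b (x₂' * (x₂ * 1))
    simp only [mul_one, n2, n2', h2, h2'] at h
    exact h
  exact ⟨⟨r1a, r1b, r1c⟩, ⟨g2a, g2b, g2c⟩, ⟨s2a, s2b⟩, r2, g5, s7,
    ⟨r5a, r5b, r5c, r5d⟩, ⟨g8a, g8b, s4a, s4b⟩⟩
end

section
/- Let H be the group with nine generators h₁, h₃, h₄, h₅, h₆, h₇, h₈, h₉, h₁₀ and the following defining relations, where ⟨u,v⟩ = e denotes the braid relation u·v·u = v·u·v and [u,v] = e denotes u·v = v·u: (i) hⱼ² = e for all j ∈ {1,3,4,5,6,7,8,9,10}; (ii) braid relations ⟨h₄,h₉⟩ = ⟨h₁,h₄⟩ = ⟨h₁,h₃⟩ = ⟨h₃,h₄⟩ = ⟨h₃,h₆⟩ = ⟨h₃,h₅⟩ = ⟨h₅,h₆⟩ = ⟨h₅,h₈⟩ = ⟨h₅,h₇⟩ = ⟨h₈,h₇⟩ = ⟨h₇,h₁₀⟩ = e; (iii) commutation relations [h₉,h₁] = [h₉,h₃] = [h₉,h₅] = [h₉,h₆] = [h₉,h₇] = [h₉,h₈] = [h₉,h₁₀] = [h₁,h₅]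 = [h₁,h₆] = [h₁,h₇] = [h₁,h₈] = [h₁,h₁₀] = [h₃,h₇] = [h₃,h₈] = [h₃,h₁₀] = [h₄,h₅] = [h₄,h₆] = [h₄,h₇] = [h₄,h₈] = [h₄,h₁₀] = [h₆,h₇] = [h₆,h₈] = [h₆,h₁₀] = [h₅,h₁₀] = [h₈,h₁₀] = e; (iv) [h₁, h₄·h₃·h₄] = [h₆, h₃·h₅·h₃] = [h₈, h₅·h₇·h₅] = e. Then H is isomorphic to the symmetric group S₁₀ on ten letters (Equiv.Perm (Fin 10)). -/
/- Theorem 3.3 of the paper in its simplified-presentation form: the group `G₁`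
attached to the degenerated surface `R₅ ∪ R₅`, presented on the nine generators
`{1,3,4,5,6,7,8,9,10}` with the listed relations, is isomorphic to `S₁₀`. -/

namespace Stmt9

/-- The nine generators `h₁, h₃, h₄, h₅, h₆, h₇, h₈, h₉, h₁₀`. -/
inductive Gen : Type
  | g1 | g3 | g4 | g5 | g6 | g7 | g8 | g9 | g10
  deriving DecidableEq

open Gen

/-- The generator as an element of the free group. -/
def h (g : Gen) : FreeGroup Gen := FreeGroup.of g

/-- Relator for the braid relation `⟨u,v⟩ = e`, i.e. `u·v·u = v·u·v`. -/
def braidR (u v : FreeGroup Gen) : FreeGroup Gen := u * v * u * (v * u * v)⁻¹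

/-- Relator for the commutation relation `[u,v] = e`, i.e. `u·v = v·u`. -/
def commR (u v : FreeGroup Gen) : FreeGroup Gen := u * v * u⁻¹ * v⁻¹

/-- The defining relators (i)–(iv). -/
def relList : List (FreeGroup Gen) :=
  [ -- (i) squares
    h g1 ^ 2, h g3 ^ 2, h g4 ^ 2, h g5 ^ 2, h g6 ^ 2, h g7 ^ 2, h g8 ^ 2,
    h g9 ^ 2, h g10 ^ 2,
    -- (ii) braid relations
    braidR (h g4) (h g9), braidR (h g1) (h g4), braidR (h g1) (h g3),
    braidR (h g3) (h g4), braidR (h g3) (h g6), braidR (h g3) (h g5),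
    braidR (h g5) (h g6), braidR (h g5) (h g8), braidR (h g5) (h g7),
    braidR (h g8) (h g7), braidR (h g7) (h g10),
    -- (iii) commutation relations
    commR (h g9) (h g1), commR (h g9) (h g3), commR (h g9) (h g5),
    commR (h g9) (h g6), commR (h g9) (h g7), commR (h g9) (h g8),
    commR (h g9) (h g10),
    commR (h g1) (h g5), commR (h g1) (h g6), commR (h g1) (h g7),
    commR (h g1) (h g8), commR (h g1) (h g10),
    commR (h g3) (h g7), commR (h g3) (h g8), commR (h g3) (h g10),
    commR (h g4) (h g5), commR (h g4) (h g6), commR (h g4) (h g7),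
    commR (h g4) (h g8), commR (h g4) (h g10),
    commR (h g6) (h g7), commR (h g6) (h g8), commR (h g6) (h g10),
    commR (h g5) (h g10), commR (h g8) (h g10),
    -- (iv)
    commR (h g1) (h g4 * h g3 * h g4), commR (h g6) (h g3 * h g5 * h g3),
    commR (h g8) (h g5 * h g7 * h g5) ]

/-- The full relator set. -/
def rels : Set (FreeGroup Gen) := {w | w ∈ relList}

end Stmt9

/-!
Sending `h₉, h₄, h₁, h₃, h₆, h₅, h₈, h₇, h₁₀` to the transpositions
`(0 1), (1 2), (2 3), (2 4), (4 5), (4 6), (6 7), (6 8), (8 9)` respects all relations, so it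
defines a homomorphism to `S₁₀`. The elements `h₉, h₄, h₁, h₁h₃h₁, h₆, h₆h₅h₆, h₈, h₈h₇h₈, h₁₀`,
mapped to the adjacent transpositions `(i, i + 1)`, generate the group and satisfy the Coxeter
relations of type `A₉`; relations (iv) are exactly what makes the conjugated generators commute
with the generators two steps away. In any group generated by `s₀, …, s_{n-1}` subject to these
relations, every element is a product `w₁ ⋯ wₙ` with `wₘ = s_{m-1} s_{m-2} ⋯ s_j` for some
`j ≤ m`, because this set of products is stable under right multiplication by each `sᵢ`. Hence
the group has at most `(n + 1)!` elements, and the surjection onto `S₁₀` is an isomorphism.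
-/

open Equiv Nat

section Involutions

variable {G : Type*} [Group G] {a b c d : G}

theorem mul_mul_cancel_of_mul_self (ha : a * a = 1) (x : G) : a * (a * x) = x := by
  rw [← mul_assoc, ha, one_mul]

theorem conj_mul_self_eq_one (ha : a * a = 1) (hc : c * c = 1) :
    a * c * a * (a * c * a) = 1 := by
  simp only [mul_assoc, mul_mul_cancel_of_mul_self ha, mul_mul_cancel_of_mul_self hc, ha]

theorem braid_conj_self (ha : a * a = 1) (hc : c * c = 1) (hac : a * c * a = c * a * c) :
    a * (a * c * a) * a = a * c * a * a * (a * c * a) := by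
  calc a * (a * c * a) * a = c * a * c * c * a := by
        simp only [mul_assoc, mul_mul_cancel_of_mul_self ha, mul_mul_cancel_of_mul_self hc, ha,
          mul_one]
    _ = a * c * a * c * a := by rw [hac]
    _ = a * c * a * a * (a * c * a) := by simp only [mul_assoc, mul_mul_cancel_of_mul_self ha]

theorem braid_conj_of_commute (ha : a * a = 1) (had : Commute a d)
    (hcd : c * d * c = d * c * d) : a * c * a * d * (a * c * a) = d * (a * c * a) * d := by
  calc a * c * a * d * (a * c * a) = a * (c * d * c) * a := by
        simp only [mul_assoc, had.left_comm, mul_mul_cancel_of_mul_self ha]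
    _ = d * (a * c * a) * d := by
        rw [hcd]; simp only [mul_assoc, had.left_comm, had.eq]

theorem commute_conj_of_braid (ha : a * a = 1) (hb : b * b = 1) (hab : a * b * a = b * a * b)
    (h : Commute a (b * c * b)) : Commute b (a * c * a) := by
  have ha' : a⁻¹ = a := inv_eq_of_mul_eq_one_right ha
  have hb' : b⁻¹ = b := inv_eq_of_mul_eq_one_right hb
  have hb_conj : a * b * a * (a * b)⁻¹ = b := by
    rw [mul_inv_rev, ha', hb', hab]
    simp only [mul_assoc, mul_mul_cancel_of_mul_self hb, ha, mul_one]
  have hc_conj : a * b * (b * c * b) * (a * b)⁻¹ = a * c * a := by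
    rw [mul_inv_rev, ha', hb']
    simp only [mul_assoc, mul_mul_cancel_of_mul_self hb]
  rw [← hb_conj, ← hc_conj, Commute.conj_iff]
  exact h

end Involutions

section TypeA

variable {G : Type*} [Group G]

/-- The Coxeter relations of type `Aₙ` among `s 0, …, s (n - 1)`; the values `s i` for `n ≤ i`
play no role. -/
structure TypeARelations (s : ℕ → G) (n : ℕ) : Prop where
  mul_self : ∀ i < n, s i * s i = 1
  braid : ∀ i, i + 1 < n → s i * s (i + 1) * s i = s (i + 1) * s i * s (i + 1)
  commute : ∀ i j, i + 2 ≤ j → j < n → Commute (s i) (s j)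

/-- `descProd s k j = s (k - 1) * s (k - 2) * ⋯ * s j`, and `1` when `k ≤ j`. -/
def descProd (s : ℕ → G) (k j : ℕ) : G :=
  if j < k then descProd s k (j + 1) * s j else 1
termination_by k - j

variable {s : ℕ → G} {n : ℕ}

theorem descProd_of_lt {k j : ℕ} (h : j < k) : descProd s k j = descProd s k (j + 1) * s j := by
  rw [descProd, if_pos h]

theorem descProd_of_le {k j : ℕ} (h : k ≤ j) : descProd s k j = 1 := by
  rw [descProd, if_neg (Nat.not_lt.mpr h)]

namespace TypeARelations

theorem commute_descProd (hs : TypeARelations s n) {i k : ℕ} (hk : k ≤ n) (j : ℕ)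
    (hij : i + 2 ≤ j) : Commute (s i) (descProd s k j) := by
  rcases Nat.lt_or_ge j k with hjk | hjk
  · rw [descProd_of_lt hjk]
    exact (commute_descProd hs hk (j + 1) (by omega)).mul_right (hs.commute i j hij (by omega))
  · rw [descProd_of_le hjk]
    exact Commute.one_right _
termination_by k - j

theorem descProd_mul_succ (hs : TypeARelations s n) {i k : ℕ} (hk : k ≤ n) (hik : i + 2 ≤ k)
    (j : ℕ) (hji : j ≤ i) : descProd s k j * s (i + 1) = s i * descProd s k j := by
  rw [descProd_of_lt (by omega : j < k)]
  rcases Nat.lt_or_eq_of_le hji with hji | rfl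
  · calc descProd s k (j + 1) * s j * s (i + 1)
        = descProd s k (j + 1) * s (i + 1) * s j := by
          rw [mul_assoc, (hs.commute j (i + 1) (by omega) (by omega)).eq, mul_assoc]
      _ = s i * (descProd s k (j + 1) * s j) := by
          rw [descProd_mul_succ hs hk hik (j + 1) hji, mul_assoc]
  · rw [descProd_of_lt (by omega : j + 1 < k)]
    calc descProd s k (j + 2) * s (j + 1) * s j * s (j + 1)
        = descProd s k (j + 2) * (s j * s (j + 1) * s j) := by
          rw [hs.braid j (by omega)]; simp only [mul_assoc]
      _ = s j * (descProd s k (j + 2) * s (j + 1) * s j) := by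
          rw [← mul_assoc, ← mul_assoc, ← (hs.commute_descProd hk (j + 2) le_rfl).eq]
          simp only [mul_assoc]
termination_by k - j

end TypeARelations

section NormalForms

variable [DecidableEq G]

/-- The products `w₁ * ⋯ * wₘ` with each `wₗ = descProd s l jₗ` for some `jₗ ≤ l`. -/
def normalForms (s : ℕ → G) : ℕ → Finset G
  | 0 => {1}
  | m + 1 =>
    (Finset.range (m + 2)).biUnion fun j => (normalForms s m).image (· * descProd s (m + 1) j)

theorem card_normalForms_le (m : ℕ) : (normalForms s m).card ≤ (m + 1)! := by
  induction m with
  | zero => simp [normalForms]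
  | succ m ih =>
    calc (normalForms s (m + 1)).card
        ≤ ∑ j ∈ Finset.range (m + 2),
            ((normalForms s m).image (· * descProd s (m + 1) j)).card := Finset.card_biUnion_le
      _ ≤ ∑ _j ∈ Finset.range (m + 2), (m + 1)! :=
          Finset.sum_le_sum fun j _ => Finset.card_image_le.trans ih
      _ = (m + 2)! := by simp [Nat.factorial_succ (m + 1)]

theorem mem_normalForms_succ {m : ℕ} {x : G} :
    x ∈ normalForms s (m + 1) ↔
      ∃ j ≤ m + 1, ∃ y ∈ normalForms s m, y * descProd s (m + 1) j = x := by
  simp only [normalForms, Finset.mem_biUnion, Finset.mem_range, Finset.mem_image, Nat.lt_succ_iff]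

theorem one_mem_normalForms (m : ℕ) : (1 : G) ∈ normalForms s m := by
  induction m with
  | zero => exact Finset.mem_singleton_self 1
  | succ m ih =>
    exact mem_normalForms_succ.mpr ⟨m + 1, le_rfl, 1, ih, by rw [descProd_of_le le_rfl, mul_one]⟩

namespace TypeARelations

variable (hs : TypeARelations s n)
include hs

theorem mul_mem_normalForms {m : ℕ} (hm : m ≤ n) {x : G} (hx : x ∈ normalForms s m) {i : ℕ}
    (hi : i < m) : x * s i ∈ normalForms s m := by
  induction m generalizing x i with
  | zero => omega
  | succ m ih =>
    obtain ⟨j, hj, y, hy, rfl⟩ := mem_normalForms_succ.mp hx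
    rw [mem_normalForms_succ]
    rcases lt_trichotomy (i + 1) j with hij | rfl | hji
    · refine ⟨j, hj, y * s i, ih (by omega) hy (by omega), ?_⟩
      rw [mul_assoc, mul_assoc, (hs.commute_descProd hm j hij).eq]
    · exact ⟨i, by omega, y, hy, by rw [mul_assoc, ← descProd_of_lt (by omega)]⟩
    · rcases Nat.lt_or_eq_of_le (Nat.lt_succ_iff.mp hji) with hji | rfl
      · obtain ⟨i, rfl⟩ : ∃ i', i = i' + 1 := ⟨i - 1, by omega⟩
        refine ⟨j, hj, y * s i, ih (by omega) hy (by omega), ?_⟩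
        simp only [mul_assoc]
        rw [hs.descProd_mul_succ hm (by omega) j (by omega)]
      · refine ⟨j + 1, by omega, y, hy, ?_⟩
        rw [descProd_of_lt (by omega : j < m + 1), mul_assoc, mul_assoc, hs.mul_self j (by omega),
          mul_one]

theorem mem_normalForms (hgen : Subgroup.closure (s '' Set.Iio n) = ⊤) (x : G) :
    x ∈ normalForms s n := by
  have hx : x ∈ Subgroup.closure (s '' Set.Iio n) := hgen ▸ Subgroup.mem_top x
  induction hx using Subgroup.closure_induction_right with
  | one => exact one_mem_normalForms n
  | mul_right x _ y hy ih =>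
    obtain ⟨i, hi, rfl⟩ := hy
    exact hs.mul_mem_normalForms le_rfl ih hi
  | mul_inv_cancel x _ y hy ih =>
    obtain ⟨i, hi, rfl⟩ := hy
    rw [inv_eq_of_mul_eq_one_right (hs.mul_self i hi)]
    exact hs.mul_mem_normalForms le_rfl ih hi

end TypeARelations

end NormalForms

theorem TypeARelations.finite_and_natCard_le (hs : TypeARelations s n)
    (hgen : Subgroup.closure (s '' Set.Iio n) = ⊤) : Finite G ∧ Nat.card G ≤ (n + 1)! := by
  classical
  let _ : Fintype G := ⟨normalForms s n, hs.mem_normalForms hgen⟩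
  exact ⟨inferInstance, (Nat.card_eq_fintype_card (α := G)).trans_le (card_normalForms_le n)⟩

theorem TypeARelations.bijective_of_map_eq_swap (hs : TypeARelations s n)
    (hgen : Subgroup.closure (s '' Set.Iio n) = ⊤) (f : G →* Perm (Fin (n + 1)))
    (hf : ∀ i : Fin n, f (s i) = swap i.castSucc i.succ) : Function.Bijective f := by
  obtain ⟨_, hcard⟩ := hs.finite_and_natCard_le hgen
  have hsurj : Function.Surjective f := by
    rw [← MonoidHom.mrange_eq_top, eq_top_iff, ← Perm.mclosure_swap_castSucc_succ n,
      Submonoid.closure_le]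
    rintro _ ⟨i, rfl⟩
    exact ⟨s i, hf i⟩
  exact hsurj.bijective_of_nat_card_le (by rwa [Nat.card_perm, Nat.card_fin])

end TypeA

namespace Stmt9

open Gen

def genPerm : Gen → Perm (Fin 10)
  | g9 => swap 0 1
  | g4 => swap 1 2
  | g1 => swap 2 3
  | g3 => swap 2 4
  | g6 => swap 4 5
  | g5 => swap 4 6
  | g8 => swap 6 7
  | g7 => swap 6 8
  | g10 => swap 8 9

theorem lift_genPerm_eq_one : ∀ r ∈ rels, FreeGroup.lift genPerm r = 1 := by
  intro r hr
  simp only [rels, Set.mem_ofPred_eq] at hr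
  fin_cases hr <;>
    simp only [braidR, commR, h, map_mul, map_pow, map_inv, FreeGroup.lift_apply_of] <;> decide

abbrev G := PresentedGroup rels

def gen (g : Gen) : G := PresentedGroup.of g

theorem mk_eq_one_of_mem {r : FreeGroup Gen} (hr : r ∈ relList) : PresentedGroup.mk rels r = 1 :=
  (QuotientGroup.eq_one_iff r).mpr (Subgroup.subset_normalClosure hr)

theorem gen_mul_self (g : Gen) : gen g * gen g = 1 := by
  have hg : h g ^ 2 ∈ relList := by cases g <;> simp [relList]
  have := mk_eq_one_of_mem hg
  rwa [map_pow, sq] at this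

theorem gen_braid (a b : Gen) (hr : braidR (h a) (h b) ∈ relList := by simp [relList]) :
    gen a * gen b * gen a = gen b * gen a * gen b :=
  mul_inv_eq_one.mp (mk_eq_one_of_mem hr)

theorem mk_commute {u v : FreeGroup Gen} (hr : commR u v ∈ relList) :
    Commute (PresentedGroup.mk rels u) (PresentedGroup.mk rels v) :=
  mul_inv_eq_iff_eq_mul.mp (mul_inv_eq_one.mp (mk_eq_one_of_mem hr))

theorem commute_gen (a b : Gen) (hr : commR (h a) (h b) ∈ relList := by simp [relList]) :
    Commute (gen a) (gen b) :=
  mk_commute hr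

theorem commute_gen_conj (a b c : Gen)
    (hr : commR (h a) (h b * h c * h b) ∈ relList := by simp [relList]) :
    Commute (gen a) (gen b * gen c * gen b) :=
  mk_commute hr

/-- The preimages of the adjacent transpositions `(i, i + 1)` under `toPerm`. -/
def coxeterGen : ℕ → G
  | 0 => gen g9
  | 1 => gen g4
  | 2 => gen g1
  | 3 => gen g1 * gen g3 * gen g1
  | 4 => gen g6
  | 5 => gen g6 * gen g5 * gen g6
  | 6 => gen g8
  | 7 => gen g8 * gen g7 * gen g8
  | 8 => gen g10
  | _ => 1

theorem typeARelations_coxeterGen : TypeARelations coxeterGen 9 where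
  mul_self i hi := by
    interval_cases i
    all_goals first
      | exact gen_mul_self _
      | exact conj_mul_self_eq_one (gen_mul_self _) (gen_mul_self _)
  braid i hi := by
    obtain hi : i < 8 := by omega
    interval_cases i
    exacts [(gen_braid g4 g9).symm, (gen_braid g1 g4).symm,
      braid_conj_self (gen_mul_self g1) (gen_mul_self g3) (gen_braid g1 g3),
      braid_conj_of_commute (gen_mul_self g1) (commute_gen g1 g6) (gen_braid g3 g6),
      braid_conj_self (gen_mul_self g6) (gen_mul_self g5) (gen_braid g5 g6).symm,
      braid_conj_of_commute (gen_mul_self g6) (commute_gen g6 g8) (gen_braid g5 g8),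
      braid_conj_self (gen_mul_self g8) (gen_mul_self g7) (gen_braid g8 g7),
      braid_conj_of_commute (gen_mul_self g8) (commute_gen g8 g10) (gen_braid g7 g10)]
  commute i j hij hj := by
    have h43 : Commute (gen g4) (gen g1 * gen g3 * gen g1) :=
      commute_conj_of_braid (gen_mul_self g1) (gen_mul_self g4) (gen_braid g1 g4)
        (commute_gen_conj g1 g4 g3)
    have h35 : Commute (gen g3) (gen g6 * gen g5 * gen g6) :=
      commute_conj_of_braid (gen_mul_self g6) (gen_mul_self g3) (gen_braid g3 g6).symm
        (commute_gen_conj g6 g3 g5)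
    have h57 : Commute (gen g5) (gen g8 * gen g7 * gen g8) :=
      commute_conj_of_braid (gen_mul_self g8) (gen_mul_self g5) (gen_braid g5 g8).symm
        (commute_gen_conj g8 g5 g7)
    -- All other commutations reduce to relations (iii) between the letters.
    obtain ⟨d, rfl⟩ : ∃ d, j = i + 2 + d := ⟨j - (i + 2), by omega⟩
    obtain hi : i < 7 := by omega
    obtain hd : d < 7 - i := by omega
    interval_cases i <;> interval_cases d <;> simp only [Nat.reduceAdd, coxeterGen] <;>
      repeat' first
        | exact h43 | exact h35 | exact h57
        | exact commute_gen _ _ (by simp [relList])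
        | exact (commute_gen _ _ (by simp [relList])).symm
        | apply Commute.mul_left | apply Commute.mul_right

theorem closure_coxeterGen : Subgroup.closure (coxeterGen '' Set.Iio 9) = ⊤ := by
  have mem (i : ℕ) (hi : i < 9 := by norm_num) :
      coxeterGen i ∈ Subgroup.closure (coxeterGen '' Set.Iio 9) :=
    Subgroup.subset_closure ⟨i, hi, rfl⟩
  have conj_conj (a c : Gen) : gen a * (gen a * gen c * gen a) * gen a = gen c := by
    simp only [mul_assoc, mul_mul_cancel_of_mul_self (gen_mul_self a), gen_mul_self, mul_one]
  rw [eq_top_iff, ← PresentedGroup.closure_range_of, Subgroup.closure_le]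
  rintro _ ⟨g, rfl⟩
  change gen g ∈ Subgroup.closure _
  cases g with
  | g9 => exact mem 0
  | g4 => exact mem 1
  | g1 => exact mem 2
  | g6 => exact mem 4
  | g8 => exact mem 6
  | g10 => exact mem 8
  | g3 => rw [← conj_conj g1 g3]; exact mul_mem (mul_mem (mem 2) (mem 3)) (mem 2)
  | g5 => rw [← conj_conj g6 g5]; exact mul_mem (mul_mem (mem 4) (mem 5)) (mem 4)
  | g7 => rw [← conj_conj g8 g7]; exact mul_mem (mul_mem (mem 6) (mem 7)) (mem 6)

noncomputable def toPerm : G →* Perm (Fin 10) := PresentedGroup.toGroup lift_genPerm_eq_one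

theorem toPerm_gen (g : Gen) : toPerm (gen g) = genPerm g := PresentedGroup.toGroup.of _

theorem toPerm_coxeterGen (i : Fin 9) : toPerm (coxeterGen i) = swap i.castSucc i.succ := by
  fin_cases i <;> simp only [coxeterGen, map_mul, toPerm_gen] <;> decide

end Stmt9

/-- The simplified presentation of `G₁` for `R₅ ∪ R₅` is isomorphic to `S₁₀`. -/
theorem stmt9 : Nonempty (PresentedGroup Stmt9.rels ≃* Equiv.Perm (Fin 10)) :=
  ⟨MulEquiv.ofBijective Stmt9.toPerm <| Stmt9.typeARelations_coxeterGen.bijective_of_map_eq_swap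
    Stmt9.closure_coxeterGen _ Stmt9.toPerm_coxeterGen⟩
end

section
/- Let n ≥ 3 be a natural number, let Iₙ = {1} ∪ {3, 4, …, 2n+2} (a set of 2n+1 indices), and let Eₙ be the set of unordered pairs of indices consisting of: the three pairs within each triangle Tₖ = {2k−1, 2k+1, 2k+2} for k = 1, …, n−1 (where for k = 1 the triangle is {1, 3, 4}), together with the pairs {4, 2n+1} and {2n−1, 2n+2}. Let H be the group with generators xᵢ for i ∈ Iₙ and defining relations: (i) xᵢ² = e for all i ∈ Iₙ; (ii) the braid relation xᵢ·xⱼ·xᵢ = xⱼ·xᵢ·xⱼ for every pair {i,j} ∈ Eₙ; (iii) the commutation relation xᵢ·xⱼ = xⱼ·xᵢ for every pair {i,j} of distinct indices of Iₙ not in Eₙ; (iv) [x₁, x₄·x₃·x₄] = e and [x_{2k+2}, x_{2k−1}·x_{2k+1}·x_{2k−1}] = e for k = 2, …, n−1, where [u,v] = e denotes u·v = v·u. Then H is isomorphic to the symmetric group S_{2n+2} on 2n+2 letters (Equiv.Perm (Fin (2n+2))). -/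
/- The group-theoretic content of Theorem 3.4 (the main Theorem 1.1) of the
paper: for `n ≥ 3`, the group `G₁` attached to the degenerated surface
`R_{n+1} ∪ R_{n+1}`, presented on the generators indexed by
`Iₙ = {1} ∪ {3, 4, …, 2n+2}` with the listed relations, is isomorphic to the
symmetric group `S_{2n+2}`. -/

namespace Stmt10

/-- The index set `Iₙ = {1} ∪ {3, 4, …, 2n+2}` of the generators. -/
def Idx (n : ℕ) : Type := {i : ℕ // i = 1 ∨ (3 ≤ i ∧ i ≤ 2 * n + 2)}

/-- The unordered pair `{i,j}` belongs to `Eₙ`: it is one of the three pairs of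
a triangle `Tₖ = {2k−1, 2k+1, 2k+2}` for some `1 ≤ k ≤ n−1`, or one of the two
extra pairs `{4, 2n+1}` and `{2n−1, 2n+2}`. -/
def inE (n i j : ℕ) : Prop :=
  (∃ k, 1 ≤ k ∧ k ≤ n - 1 ∧
    (({i, j} : Finset ℕ) = {2 * k - 1, 2 * k + 1} ∨
     ({i, j} : Finset ℕ) = {2 * k - 1, 2 * k + 2} ∨
     ({i, j} : Finset ℕ) = {2 * k + 1, 2 * k + 2})) ∨
  ({i, j} : Finset ℕ) = {4, 2 * n + 1} ∨
  ({i, j} : Finset ℕ) = {2 * n - 1, 2 * n + 2}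

/-- Relator for the braid relation `⟨u,v⟩ = e`, i.e. `u·v·u = v·u·v`. -/
def braidR {α : Type*} (u v : FreeGroup α) : FreeGroup α := u * v * u * (v * u * v)⁻¹

/-- Relator for the commutation relation `[u,v] = e`, i.e. `u·v = v·u`. -/
def commR {α : Type*} (u v : FreeGroup α) : FreeGroup α := u * v * u⁻¹ * v⁻¹

/-- The defining relators: (i) squares; (ii) braid relations for the pairs in
`Eₙ`; (iii) commutation relations for the remaining pairs of distinct indices;
(iv) `[x₁, x₄·x₃·x₄] = e` and `[x_{2k+2}, x_{2k−1}·x_{2k+1}·x_{2k−1}] = e` for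
`k = 2, …, n−1`. -/
def rels (n : ℕ) : Set (FreeGroup (Idx n)) :=
  {w | ∃ i : Idx n, w = FreeGroup.of i ^ 2} ∪
  {w | ∃ i j : Idx n, inE n i.1 j.1 ∧
        w = braidR (FreeGroup.of i) (FreeGroup.of j)} ∪
  {w | ∃ i j : Idx n, i.1 ≠ j.1 ∧ ¬ inE n i.1 j.1 ∧
        w = commR (FreeGroup.of i) (FreeGroup.of j)} ∪
  {w | ∃ a b c : Idx n, a.1 = 1 ∧ b.1 = 3 ∧ c.1 = 4 ∧
        w = commR (FreeGroup.of a) (FreeGroup.of c * FreeGroup.of b * FreeGroup.of c)} ∪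
  {w | ∃ k, 2 ≤ k ∧ k ≤ n - 1 ∧ ∃ a b c : Idx n,
        a.1 = 2 * k + 2 ∧ b.1 = 2 * k - 1 ∧ c.1 = 2 * k + 1 ∧
        w = commR (FreeGroup.of a) (FreeGroup.of b * FreeGroup.of c * FreeGroup.of b)}

end Stmt10

namespace CoxA
open Stmt10 Nat
def rels (N : ℕ) : Set (FreeGroup (Fin N)) :=
  {w | ∃ i : Fin N, w = FreeGroup.of i ^ 2} ∪
  {w | ∃ i j : Fin N, (i : ℕ) + 1 = j ∧ w = braidR (FreeGroup.of i) (FreeGroup.of j)} ∪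
  {w | ∃ i j : Fin N, (i : ℕ) + 2 ≤ j ∧ w = commR (FreeGroup.of i) (FreeGroup.of j)}
abbrev C (N : ℕ) := PresentedGroup (rels N)
def s {N : ℕ} (i : Fin N) : C N := PresentedGroup.of i
lemma mk_rel {α : Type*} {rs : Set (FreeGroup α)} {r : FreeGroup α} (h : r ∈ rs) :
    PresentedGroup.mk rs r = 1 :=
  (QuotientGroup.eq_one_iff _).mpr (Subgroup.subset_normalClosure h)
lemma sq {N : ℕ} (i : Fin N) : s i * s i = 1 := by
  have h := mk_rel (show FreeGroup.of i ^ 2 ∈ rels N from Or.inl (Or.inl ⟨i, rfl⟩))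
  rw [map_pow, pow_two] at h; exact h
lemma s_inv {N : ℕ} (i : Fin N) : (s i)⁻¹ = s i := inv_eq_of_mul_eq_one_right (sq i)
lemma braid {N : ℕ} {i j : Fin N} (h : (i : ℕ) + 1 = j) :
    s i * s j * s i = s j * s i * s j := by
  have h2 := mk_rel (show braidR (FreeGroup.of i) (FreeGroup.of j) ∈ rels N from
    Or.inl (Or.inr ⟨i, j, h, rfl⟩))
  rw [braidR] at h2; simp only [map_mul, map_inv] at h2
  exact mul_inv_eq_one.mp h2
lemma comm {N : ℕ} {i j : Fin N} (h : (i : ℕ) + 2 ≤ j) :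
    s i * s j = s j * s i := by
  have h2 := mk_rel (show commR (FreeGroup.of i) (FreeGroup.of j) ∈ rels N from
    Or.inr ⟨i, j, h, rfl⟩)
  rw [commR] at h2; simp only [map_mul, map_inv] at h2
  rw [mul_inv_eq_one, mul_inv_eq_iff_eq_mul] at h2; exact h2
variable {N : ℕ}
def wrd (N : ℕ) (j : ℕ) : C (N + 1) :=
  if h : j ≤ N then s ⟨j, by omega⟩ * wrd N (j + 1) else 1
termination_by N + 1 - j
decreasing_by omega
lemma wrd_of_le {j : ℕ} (h : j ≤ N) : wrd N j = s ⟨j, by omega⟩ * wrd N (j + 1) := by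
  rw [wrd]; exact dif_pos h
lemma wrd_of_gt {j : ℕ} (h : N < j) : wrd N j = 1 := by
  rw [wrd]; exact dif_neg (by omega)
lemma comm_wrd (i : Fin (N + 1)) :
    ∀ k j, N + 1 - j ≤ k → (i : ℕ) + 2 ≤ j → s i * wrd N j = wrd N j * s i := by
  intro k
  induction k with
  | zero => intro j h1 h2; rw [wrd_of_gt (by omega)]; rw [mul_one, one_mul]
  | succ k ih =>
    intro j h1 h2
    by_cases h : j ≤ N
    · rw [wrd_of_le h, ← mul_assoc,
        comm (show (i : ℕ) + 2 ≤ ((⟨j, by omega⟩ : Fin (N+1)) : ℕ) from h2),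
        mul_assoc, ih (j + 1) (by omega) (by omega), ← mul_assoc]
    · rw [wrd_of_gt (by omega), mul_one, one_mul]
lemma swap_wrd_base (j : ℕ) (hiN : j + 1 ≤ N) :
    s ⟨j + 1, by omega⟩ * wrd N j = wrd N j * s ⟨j, by omega⟩ := by
  have hb : (s ⟨j+1, by omega⟩ : C (N+1)) * s ⟨j, by omega⟩ * s ⟨j+1, by omega⟩
      = s ⟨j, by omega⟩ * s ⟨j+1, by omega⟩ * s ⟨j, by omega⟩ := (braid (by simp)).symm
  have hc : (s ⟨j, by omega⟩ : C (N+1)) * wrd N (j+2) = wrd N (j+2) * s ⟨j, by omega⟩ :=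
    comm_wrd _ (N + 2) (j + 2) (by omega) (by simp)
  rw [wrd_of_le (show j ≤ N by omega), wrd_of_le (show j + 1 ≤ N from hiN)]
  calc s ⟨j+1, by omega⟩ * (s ⟨j, by omega⟩ * (s ⟨j+1, by omega⟩ * wrd N (j+1+1)))
      = (s ⟨j+1, by omega⟩ * s ⟨j, by omega⟩ * s ⟨j+1, by omega⟩) * wrd N (j+2) := by
        rw [mul_assoc, mul_assoc]
    _ = (s ⟨j, by omega⟩ * s ⟨j+1, by omega⟩ * s ⟨j, by omega⟩) * wrd N (j+2) := by rw [hb]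
    _ = s ⟨j, by omega⟩ * s ⟨j+1, by omega⟩ * (s ⟨j, by omega⟩ * wrd N (j+2)) := by
        rw [mul_assoc]
    _ = s ⟨j, by omega⟩ * s ⟨j+1, by omega⟩ * (wrd N (j+2) * s ⟨j, by omega⟩) := by rw [hc]
    _ = s ⟨j, by omega⟩ * (s ⟨j+1, by omega⟩ * wrd N (j+1+1)) * s ⟨j, by omega⟩ := by
        group
lemma swap_wrd : ∀ k j i, ∀ (_ : j ≤ i) (h2 : i + 1 ≤ N) (_ : i - j ≤ k),
    s ⟨i + 1, by omega⟩ * wrd N j = wrd N j * s ⟨i, by omega⟩ := by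
  intro k
  induction k with
  | zero =>
    intro j i h1 h2 h3
    have : j = i := by omega
    subst this
    exact swap_wrd_base j h2
  | succ k ih =>
    intro j i h1 h2 h3
    by_cases hji : j = i
    · subst hji; exact swap_wrd_base j h2
    · rw [wrd_of_le (show j ≤ N by omega), ← mul_assoc,
        show (s ⟨i+1, by omega⟩ : C (N+1)) * s ⟨j, by omega⟩ = s ⟨j, by omega⟩ * s ⟨i+1, by omega⟩
          from (comm (by simp; omega)).symm,
        mul_assoc, ih (j + 1) i (by omega) h2 (by omega), ← mul_assoc]

lemma lift_braidR {α : Type*} {G : Type*} [Group G] (ph : α → G) (i j : α) :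
    FreeGroup.lift ph (braidR (FreeGroup.of i) (FreeGroup.of j))
      = ph i * ph j * ph i * (ph j * ph i * ph j)⁻¹ := by
  simp only [braidR, map_mul, map_inv, FreeGroup.lift_apply_of]

lemma lift_commR {α : Type*} {G : Type*} [Group G] (ph : α → G) (i j : α) :
    FreeGroup.lift ph (commR (FreeGroup.of i) (FreeGroup.of j))
      = ph i * ph j * (ph i)⁻¹ * (ph j)⁻¹ := by
  simp only [commR, map_mul, map_inv, FreeGroup.lift_apply_of]

lemma lift_sq {α : Type*} {G : Type*} [Group G] (ph : α → G) (i : α) :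
    FreeGroup.lift ph (FreeGroup.of i ^ 2) = ph i * ph i := by
  rw [map_pow, pow_two, FreeGroup.lift_apply_of]

def ι {N : ℕ} : C N →* C (N + 1) :=
  PresentedGroup.toGroup (f := fun i : Fin N => s i.castSucc) (by
    rintro r ((⟨i, rfl⟩ | ⟨i, j, hij, rfl⟩) | ⟨i, j, hij, rfl⟩)
    · rw [lift_sq]; exact sq _
    · rw [lift_braidR, mul_inv_eq_one]; exact braid (by simpa using hij)
    · rw [lift_commR, mul_inv_eq_one, mul_inv_eq_iff_eq_mul]; exact comm (by simpa using hij))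

lemma ι_s {N : ℕ} (i : Fin N) : ι (s i) = s i.castSucc := PresentedGroup.toGroup.of _

lemma gen_step (i : Fin (N + 1)) (j : ℕ) (c : C N) (hj : j ≤ N + 1) :
    ∃ j' c', j' ≤ N + 1 ∧ s i * (wrd N j * ι c) = wrd N j' * ι c' := by
  rcases Nat.lt_or_ge (↑i + 1) j with hlt | hge
  · -- i + 2 ≤ j : commute past the word
    have hiN : (i : ℕ) < N := by omega
    have hcs : Fin.castSucc ⟨(i : ℕ), hiN⟩ = i := Fin.ext rfl
    refine ⟨j, s ⟨(i : ℕ), hiN⟩ * c, hj, ?_⟩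
    rw [← mul_assoc, comm_wrd i (N + 2) j (by omega) (by omega), mul_assoc, map_mul, ι_s, hcs]
  · rcases Nat.lt_or_ge (i : ℕ) j with hlt2 | hge2
    · -- j = i + 1 : absorb to the left
      have hij : (i : ℕ) + 1 = j := by omega
      have hiN : (i : ℕ) ≤ N := by omega
      refine ⟨(i : ℕ), c, by omega, ?_⟩
      rw [wrd_of_le hiN, ← hij]
      rw [show (⟨(i : ℕ), by omega⟩ : Fin (N + 1)) = i from Fin.ext rfl, ← mul_assoc]
    · rcases Nat.eq_or_lt_of_le hge2 with heq | hlt3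
      · -- i = j : cancel square
        have hjN : j ≤ N := by omega
        refine ⟨j + 1, c, by omega, ?_⟩
        rw [wrd_of_le hjN, show (⟨j, by omega⟩ : Fin (N + 1)) = i from Fin.ext heq,
          ← mul_assoc, ← mul_assoc, sq i, one_mul]
      · -- j < i : push through, index drops by one
        obtain ⟨iv, hvi⟩ : ∃ v, (i : ℕ) = v + 1 := ⟨(i : ℕ) - 1, by omega⟩
        have hivN : iv + 1 ≤ N := by omega
        have hivN' : iv < N := by omega
        refine ⟨j, s ⟨iv, hivN'⟩ * c, hj, ?_⟩
        have hsw := swap_wrd N j iv (by omega) hivN (by omega)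
        have hieq : i = (⟨iv + 1, by omega⟩ : Fin (N + 1)) := Fin.ext hvi
        rw [hieq, ← mul_assoc, hsw, mul_assoc, map_mul, ι_s,
          show Fin.castSucc ⟨iv, hivN'⟩ = (⟨iv, by omega⟩ : Fin (N + 1)) from Fin.ext rfl]

lemma exists_rep (g : C (N + 1)) : ∃ j c, j ≤ N + 1 ∧ g = wrd N j * ι c := by
  have hg : g ∈ (Subgroup.closure
      (Set.range (PresentedGroup.of : Fin (N + 1) → C (N + 1)))).toSubmonoid := by
    rw [PresentedGroup.closure_range_of]; trivial
  rw [Subgroup.closure_toSubmonoid] at hg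
  have key : ∀ j c, j ≤ N + 1 → ∃ j' c', j' ≤ N + 1 ∧ g * (wrd N j * ι c) = wrd N j' * ι c' := by
    induction hg using Submonoid.closure_induction with
    | mem x hx =>
      rcases hx with ⟨i, rfl⟩ | hx
      · exact fun j c hj => gen_step i j c hj
      · rw [Set.mem_inv] at hx
        obtain ⟨i, hi⟩ := hx
        have hx2 : x = s i := by rw [← inv_inv x, ← hi]; exact s_inv i
        rw [hx2]
        exact fun j c hj => gen_step i j c hj
    | one => exact fun j c hj => ⟨j, c, hj, by rw [one_mul]⟩
    | mul x y hx hy ihx ihy =>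
      intro j c hj
      obtain ⟨j1, c1, hj1, h1⟩ := ihy j c hj
      obtain ⟨j2, c2, hj2, h2⟩ := ihx j1 c1 hj1
      exact ⟨j2, c2, hj2, by rw [mul_assoc, h1, h2]⟩
  obtain ⟨j', c', hj', h⟩ := key (N + 1) 1 (le_refl _)
  exact ⟨j', c', hj', by rw [← h, wrd_of_gt (by omega), map_one, one_mul, mul_one]⟩

open Nat in
lemma finite_and_card : ∀ N, Finite (C N) ∧ Nat.card (C N) ≤ (N + 1)! := by
  intro N
  induction N with
  | zero =>
    have h1 : ∀ x : C 0, x = 1 := by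
      intro x
      have := PresentedGroup.generated_by (rels 0) ⊥ (fun j => j.elim0) x
      simpa [Subgroup.mem_bot] using this
    haveI : Subsingleton (C 0) := ⟨fun a b => by rw [h1 a, h1 b]⟩
    haveI : Unique (C 0) := uniqueOfSubsingleton 1
    exact ⟨Finite.of_fintype _, by rw [Nat.card_unique]; simp⟩
  | succ N ih =>
    haveI := ih.1
    have hsurj : Function.Surjective (fun p : Fin (N + 2) × C N => wrd N p.1 * ι p.2) := by
      intro g
      obtain ⟨j, c, hj, rfl⟩ := exists_rep g
      exact ⟨(⟨j, by omega⟩, c), rfl⟩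
    have hfin : Finite (C (N + 1)) := Finite.of_surjective _ hsurj
    refine ⟨hfin, ?_⟩
    have h2 := Nat.card_le_card_of_surjective _ hsurj
    rw [Nat.card_prod, Nat.card_eq_fintype_card (α := Fin (N + 2)), Fintype.card_fin] at h2
    calc Nat.card (C (N + 1)) ≤ (N + 2) * Nat.card (C N) := h2
      _ ≤ (N + 2) * (N + 1)! := Nat.mul_le_mul_left _ ih.2
      _ = (N + 2)! := (Nat.factorial_succ _).symm

section Swaps

variable {beta : Type*} [DecidableEq beta]

lemma swap_conj {a b c : beta} (hab : a ≠ b) (hac : a ≠ c) (hbc : b ≠ c) :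
    Equiv.swap a b * Equiv.swap b c * Equiv.swap a b = Equiv.swap a c := by
  have h := (Equiv.swap_apply_apply (Equiv.swap a b) b c).symm
  rw [Equiv.swap_apply_right, Equiv.swap_apply_of_ne_of_ne (Ne.symm hac) (Ne.symm hbc),
    Equiv.swap_inv] at h
  exact h

lemma swap_braid {a b c : beta} (hab : a ≠ b) (hac : a ≠ c) (hbc : b ≠ c) :
    Equiv.swap a b * Equiv.swap b c * Equiv.swap a b
      = Equiv.swap b c * Equiv.swap a b * Equiv.swap b c := by
  rw [swap_conj hab hac hbc]
  rw [show Equiv.swap b c = Equiv.swap c b from Equiv.swap_comm b c,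
    show Equiv.swap a b = Equiv.swap b a from Equiv.swap_comm a b,
    swap_conj (Ne.symm hbc) (Ne.symm hac) (Ne.symm hab), Equiv.swap_comm]

lemma swap_commute {a b c d : beta} (h1 : a ≠ c) (h2 : a ≠ d) (h3 : b ≠ c) (h4 : b ≠ d) :
    Equiv.swap a b * Equiv.swap c d = Equiv.swap c d * Equiv.swap a b := by
  have h := Equiv.swap_apply_apply (Equiv.swap a b) c d
  rw [Equiv.swap_apply_of_ne_of_ne (Ne.symm h1) (Ne.symm h3),
    Equiv.swap_apply_of_ne_of_ne (Ne.symm h2) (Ne.symm h4), Equiv.swap_inv] at h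
  calc Equiv.swap a b * Equiv.swap c d
      = (Equiv.swap a b * Equiv.swap c d * Equiv.swap a b) * Equiv.swap a b := by
        rw [mul_assoc, Equiv.swap_mul_self, mul_one]
    _ = Equiv.swap c d * Equiv.swap a b := by rw [← h]

end Swaps

def pi (N : ℕ) : C N →* Equiv.Perm (Fin (N + 1)) :=
  PresentedGroup.toGroup (f := fun i : Fin N => Equiv.swap i.castSucc i.succ) (by
    rintro r ((⟨i, rfl⟩ | ⟨i, j, hij, rfl⟩) | ⟨i, j, hij, rfl⟩)
    · rw [lift_sq, Equiv.swap_mul_self]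
    · rw [lift_braidR, mul_inv_eq_one]
      rw [show j.castSucc = i.succ from Fin.ext (by simp [← hij])]
      exact swap_braid (by simp [Fin.ext_iff]) (by simp [Fin.ext_iff]; omega)
        (by simp [Fin.ext_iff]; omega)
    · rw [lift_commR, mul_inv_eq_one, mul_inv_eq_iff_eq_mul]
      exact swap_commute (by simp [Fin.ext_iff]; omega) (by simp [Fin.ext_iff]; omega)
        (by simp [Fin.ext_iff]; omega) (by simp [Fin.ext_iff]; omega))

lemma pi_s {N : ℕ} (i : Fin N) : pi N (s i) = Equiv.swap i.castSucc i.succ :=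
  PresentedGroup.toGroup.of _

lemma pi_surjective (N : ℕ) : Function.Surjective (pi N) := by
  have h := Subgroup.closure_eq_top_of_mclosure_eq_top
    (Equiv.Perm.mclosure_swap_castSucc_succ N)
  have hle : Subgroup.closure (Set.range fun i : Fin N => Equiv.swap i.castSucc i.succ)
      ≤ (pi N).range := by
    rw [Subgroup.closure_le]
    rintro x ⟨i, rfl⟩
    exact ⟨s i, pi_s i⟩
  intro x
  have : x ∈ (pi N).range := hle (h ▸ Subgroup.mem_top x)
  exact this

open Nat in
lemma pi_bijective (N : ℕ) : Function.Bijective (pi N) := by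
  haveI := (finite_and_card N).1
  rw [Nat.bijective_iff_surjective_and_card]
  refine ⟨pi_surjective N, le_antisymm ?_ (Nat.card_le_card_of_surjective _ (pi_surjective N))⟩
  calc Nat.card (C N) ≤ (N + 1)! := (finite_and_card N).2
    _ = Nat.card (Equiv.Perm (Fin (N + 1))) := by
        rw [Nat.card_eq_fintype_card, Fintype.card_perm, Fintype.card_fin]

end CoxA



namespace PartB

open Stmt10

variable {n : ℕ}

lemma pair_ext {i j a b : ℕ} (h : ({i, j} : Finset ℕ) = ({a, b} : Finset ℕ)) :
    (i = a ∧ j = b) ∨ (i = b ∧ j = a) := by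
  have h2 : ({i, j} : Set ℕ) = {a, b} := by
    have := congrArg (fun s : Finset ℕ => (s : Set ℕ)) h
    simpa using this
  rwa [Set.pair_eq_pair_iff] at h2

lemma pair_mk {i j a b : ℕ} (h : (i = a ∧ j = b) ∨ (i = b ∧ j = a)) :
    ({i, j} : Finset ℕ) = ({a, b} : Finset ℕ) := by
  rcases h with ⟨rfl, rfl⟩ | ⟨rfl, rfl⟩
  · rfl
  · exact Finset.pair_comm i j

/-- Arithmetic (omega-friendly) description of membership of `{a,b}` in `Eₙ`. -/
def Q (n a b : ℕ) : Prop :=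
  (a % 2 = 1 ∧ a + 2 = b ∧ 1 ≤ a ∧ b ≤ 2 * n - 1) ∨
  (a % 2 = 1 ∧ a + 3 = b ∧ 1 ≤ a ∧ a ≤ 2 * n - 3) ∨
  (a % 2 = 1 ∧ a + 1 = b ∧ 3 ≤ a ∧ a ≤ 2 * n - 1) ∨
  (a = 4 ∧ b = 2 * n + 1) ∨
  (a = 2 * n - 1 ∧ b = 2 * n + 2)

lemma inE_iff (hn : 3 ≤ n) (i j : ℕ) : inE n i j ↔ Q n i j ∨ Q n j i := by
  constructor
  · rintro (⟨k, hk1, hk2, h | h | h⟩ | h | h) <;>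
      rcases pair_ext h with ⟨h1, h2⟩ | ⟨h1, h2⟩ <;> simp only [Q]
    · exact Or.inl (Or.inl ⟨by omega, by omega, by omega, by omega⟩)
    · exact Or.inr (Or.inl ⟨by omega, by omega, by omega, by omega⟩)
    · exact Or.inl (Or.inr (Or.inl ⟨by omega, by omega, by omega, by omega⟩))
    · exact Or.inr (Or.inr (Or.inl ⟨by omega, by omega, by omega, by omega⟩))
    · exact Or.inl (Or.inr (Or.inr (Or.inl ⟨by omega, by omega, by omega, by omega⟩)))
    · exact Or.inr (Or.inr (Or.inr (Or.inl ⟨by omega, by omega, by omega, by omega⟩)))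
    · exact Or.inl (Or.inr (Or.inr (Or.inr (Or.inl ⟨by omega, by omega⟩))))
    · exact Or.inr (Or.inr (Or.inr (Or.inr (Or.inl ⟨by omega, by omega⟩))))
    · exact Or.inl (Or.inr (Or.inr (Or.inr (Or.inr ⟨by omega, by omega⟩))))
    · exact Or.inr (Or.inr (Or.inr (Or.inr (Or.inr ⟨by omega, by omega⟩))))
  · rintro (hq | hq) <;> rcases hq with ⟨h1, h2, h3, h4⟩ | ⟨h1, h2, h3, h4⟩ |
      ⟨h1, h2, h3, h4⟩ | ⟨h1, h2⟩ | ⟨h1, h2⟩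
    · exact Or.inl ⟨(i + 1) / 2, by omega, by omega,
        Or.inl (pair_mk (Or.inl ⟨by omega, by omega⟩))⟩
    · exact Or.inl ⟨(i + 1) / 2, by omega, by omega,
        Or.inr (Or.inl (pair_mk (Or.inl ⟨by omega, by omega⟩)))⟩
    · exact Or.inl ⟨(i - 1) / 2, by omega, by omega,
        Or.inr (Or.inr (pair_mk (Or.inl ⟨by omega, by omega⟩)))⟩
    · exact Or.inr (Or.inl (pair_mk (Or.inl ⟨by omega, by omega⟩)))
    · exact Or.inr (Or.inr (pair_mk (Or.inl ⟨by omega, by omega⟩)))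
    · exact Or.inl ⟨(j + 1) / 2, by omega, by omega,
        Or.inl (pair_mk (Or.inr ⟨by omega, by omega⟩))⟩
    · exact Or.inl ⟨(j + 1) / 2, by omega, by omega,
        Or.inr (Or.inl (pair_mk (Or.inr ⟨by omega, by omega⟩)))⟩
    · exact Or.inl ⟨(j - 1) / 2, by omega, by omega,
        Or.inr (Or.inr (pair_mk (Or.inr ⟨by omega, by omega⟩)))⟩
    · exact Or.inr (Or.inl (pair_mk (Or.inr ⟨by omega, by omega⟩)))
    · exact Or.inr (Or.inr (pair_mk (Or.inr ⟨by omega, by omega⟩)))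

abbrev H (n : ℕ) := PresentedGroup (Stmt10.rels n)

/-- Membership in the index set. -/
def mem (n i : ℕ) : Prop := i = 1 ∨ (3 ≤ i ∧ i ≤ 2 * n + 2)

open scoped Classical in
noncomputable def X (n : ℕ) (i : ℕ) : H n :=
  if h : mem n i then PresentedGroup.of (⟨i, h⟩ : Idx n) else 1

lemma X_of {i : ℕ} (hi : mem n i) : X n i = PresentedGroup.of (⟨i, hi⟩ : Idx n) := by
  rw [X]; exact dif_pos hi

lemma Xsq {i : ℕ} (hi : mem n i) : X n i * X n i = 1 := by
  rw [X_of hi]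
  have := CoxA.mk_rel (show _ ∈ rels n from Or.inl (Or.inl (Or.inl (Or.inl
    ⟨⟨i, hi⟩, rfl⟩))))
  rw [map_pow, pow_two] at this
  exact this

lemma Xinv {i : ℕ} (hi : mem n i) : (X n i)⁻¹ = X n i :=
  inv_eq_of_mul_eq_one_right (Xsq hi)

lemma Xbraid {i j : ℕ} (hi : mem n i) (hj : mem n j) (hE : inE n i j) :
    X n i * X n j * X n i = X n j * X n i * X n j := by
  rw [X_of hi, X_of hj]
  have := CoxA.mk_rel (show _ ∈ rels n from Or.inl (Or.inl (Or.inl (Or.inr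
    ⟨⟨i, hi⟩, ⟨j, hj⟩, hE, rfl⟩))))
  rw [braidR] at this
  simp only [map_mul, map_inv] at this
  exact mul_inv_eq_one.mp this

lemma Xcomm {i j : ℕ} (hi : mem n i) (hj : mem n j) (hne : i ≠ j) (hE : ¬ inE n i j) :
    Commute (X n i) (X n j) := by
  rw [X_of hi, X_of hj]
  have := CoxA.mk_rel (show _ ∈ rels n from Or.inl (Or.inl (Or.inr
    ⟨⟨i, hi⟩, ⟨j, hj⟩, hne, hE, rfl⟩)))
  rw [commR] at this
  simp only [map_mul, map_inv] at this
  rw [mul_inv_eq_one, mul_inv_eq_iff_eq_mul] at this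
  exact this

lemma Xstar1 (hn : 3 ≤ n) : Commute (X n 1) (X n 4 * X n 3 * X n 4) := by
  have h1 : mem n 1 := Or.inl rfl
  have h3 : mem n 3 := Or.inr ⟨by omega, by omega⟩
  have h4 : mem n 4 := Or.inr ⟨by omega, by omega⟩
  rw [X_of h1, X_of h3, X_of h4]
  have := CoxA.mk_rel (show _ ∈ rels n from Or.inl (Or.inr
    ⟨⟨1, h1⟩, ⟨3, h3⟩, ⟨4, h4⟩, rfl, rfl, rfl, rfl⟩))
  rw [commR] at this
  simp only [map_mul, map_inv] at this
  rw [mul_inv_eq_one, mul_inv_eq_iff_eq_mul] at this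
  exact this

lemma Xstar (hn : 3 ≤ n) {k : ℕ} (h2 : 2 ≤ k) (hk : k ≤ n - 1) :
    Commute (X n (2 * k + 2)) (X n (2 * k - 1) * X n (2 * k + 1) * X n (2 * k - 1)) := by
  have ha : mem n (2 * k + 2) := Or.inr ⟨by omega, by omega⟩
  have hb : mem n (2 * k - 1) := Or.inr ⟨by omega, by omega⟩
  have hc : mem n (2 * k + 1) := Or.inr ⟨by omega, by omega⟩
  rw [X_of ha, X_of hb, X_of hc]
  have := CoxA.mk_rel (show _ ∈ rels n from Or.inr
    ⟨k, h2, hk, ⟨2 * k + 2, ha⟩, ⟨2 * k - 1, hb⟩, ⟨2 * k + 1, hc⟩, rfl, rfl, rfl, rfl⟩)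
  rw [commR] at this
  simp only [map_mul, map_inv] at this
  rw [mul_inv_eq_one, mul_inv_eq_iff_eq_mul] at this
  exact this

lemma inE_of_Q (hn : 3 ≤ n) {i j : ℕ} (h : Q n i j ∨ Q n j i) : inE n i j :=
  (inE_iff hn i j).2 h

lemma not_inE (hn : 3 ≤ n) {i j : ℕ} (h : ¬ (Q n i j ∨ Q n j i)) : ¬ inE n i j := by
  rw [inE_iff hn]; exact h

/-- The two endpoints of the transposition attached to generator `i`
(vertices are labelled by a DFS order of the tree). -/
def E1 (n i : ℕ) : ℕ :=
  if i = 1 then 0 else if i = 3 then 1 else if i = 4 then 1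
  else if i = 2 * n + 1 then 2 else if i = 2 * n + 2 then 2 * n
  else if i % 2 = 1 then i - 1 else i - 2

def E2 (n i : ℕ) : ℕ :=
  if i = 1 then 1 else if i = 3 then 4 else if i = 4 then 2
  else if i = 2 * n + 1 then 3 else if i = 2 * n + 2 then 2 * n + 1
  else if i % 2 = 1 then i + 1 else i - 1

lemma shape (hn : 3 ≤ n) {i : ℕ} (hi : mem n i) :
    (i = 1 ∧ E1 n i = 0 ∧ E2 n i = 1) ∨
    (i = 3 ∧ E1 n i = 1 ∧ E2 n i = 4) ∨
    (i = 4 ∧ E1 n i = 1 ∧ E2 n i = 2) ∨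
    (i = 2 * n + 1 ∧ E1 n i = 2 ∧ E2 n i = 3) ∨
    (i = 2 * n + 2 ∧ E1 n i = 2 * n ∧ E2 n i = 2 * n + 1) ∨
    (i % 2 = 1 ∧ 5 ≤ i ∧ i ≤ 2 * n - 1 ∧ E1 n i = i - 1 ∧ E2 n i = i + 1) ∨
    (i % 2 = 0 ∧ 6 ≤ i ∧ i ≤ 2 * n ∧ E1 n i = i - 2 ∧ E2 n i = i - 1) := by
  have hi' : i = 1 ∨ (3 ≤ i ∧ i ≤ 2 * n + 2) := hi
  rcases eq_or_ne i 1 with rfl | h1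
  · exact Or.inl ⟨rfl, by simp [E1], by simp [E2]⟩
  rcases eq_or_ne i 3 with rfl | h3
  · exact Or.inr (Or.inl ⟨rfl, by simp [E1], by simp [E2]⟩)
  rcases eq_or_ne i 4 with rfl | h4
  · exact Or.inr (Or.inr (Or.inl ⟨rfl, by simp [E1], by simp [E2]⟩))
  rcases eq_or_ne i (2 * n + 1) with rfl | h5
  · refine Or.inr (Or.inr (Or.inr (Or.inl ⟨rfl, ?_, ?_⟩)))
    · rw [E1, if_neg (by omega), if_neg (by omega), if_neg (by omega), if_pos rfl]
    · rw [E2, if_neg (by omega), if_neg (by omega), if_neg (by omega), if_pos rfl]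
  rcases eq_or_ne i (2 * n + 2) with rfl | h6
  · refine Or.inr (Or.inr (Or.inr (Or.inr (Or.inl ⟨rfl, ?_, ?_⟩))))
    · rw [E1, if_neg (by omega), if_neg (by omega), if_neg (by omega), if_neg (by omega),
        if_pos rfl]
    · rw [E2, if_neg (by omega), if_neg (by omega), if_neg (by omega), if_neg (by omega),
        if_pos rfl]
  rcases Nat.even_or_odd i with he | ho
  · rw [Nat.even_iff] at he
    refine Or.inr (Or.inr (Or.inr (Or.inr (Or.inr (Or.inr ⟨he, by omega, by omega, ?_, ?_⟩)))))
    · rw [E1, if_neg h1, if_neg h3, if_neg h4, if_neg h5, if_neg h6, if_neg (by omega)]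
    · rw [E2, if_neg h1, if_neg h3, if_neg h4, if_neg h5, if_neg h6, if_neg (by omega)]
  · rw [Nat.odd_iff] at ho
    refine Or.inr (Or.inr (Or.inr (Or.inr (Or.inr (Or.inl ⟨ho, by omega, by omega, ?_, ?_⟩)))))
    · rw [E1, if_neg h1, if_neg h3, if_neg h4, if_neg h5, if_neg h6, if_pos ho]
    · rw [E2, if_neg h1, if_neg h3, if_neg h4, if_neg h5, if_neg h6, if_pos ho]

/-- The canonical inclusion of `ℕ` into `Fin (2n+2)`. -/
def fn (n a : ℕ) : Fin (2 * n + 2) := ⟨a % (2 * n + 2), Nat.mod_lt _ (by omega)⟩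

lemma fn_eq_iff {a b : ℕ} (ha : a < 2 * n + 2) (hb : b < 2 * n + 2) :
    fn n a = fn n b ↔ a = b := by
  rw [Fin.ext_iff]
  show a % (2 * n + 2) = b % (2 * n + 2) ↔ a = b
  rw [Nat.mod_eq_of_lt ha, Nat.mod_eq_of_lt hb]

lemma fn_ne {a b : ℕ} (ha : a < 2 * n + 2) (hb : b < 2 * n + 2) (h : a ≠ b) :
    fn n a ≠ fn n b := fun hc => h ((fn_eq_iff ha hb).1 hc)

/-- The transposition attached to generator `i`. -/
def tau (n i : ℕ) : Equiv.Perm (Fin (2 * n + 2)) :=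
  Equiv.swap (fn n (E1 n i)) (fn n (E2 n i))

lemma Ebound (hn : 3 ≤ n) {i : ℕ} (hi : mem n i) :
    E1 n i < 2 * n + 2 ∧ E2 n i < 2 * n + 2 ∧ E1 n i ≠ E2 n i := by
  have := shape hn hi
  omega

lemma tau_braid (hn : 3 ≤ n) {i j : ℕ} (hi : mem n i) (hj : mem n j) (hq : Q n i j) :
    tau n i * tau n j * tau n i = tau n j * tau n i * tau n j := by
  have bi := Ebound hn hi
  have bj := Ebound hn hj
  rcases eq_or_ne j (i + 1) with rfl | hne1
  · -- pattern E1 i = E1 j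
    have key : E1 n i = E1 n (i + 1) ∧ E2 n i ≠ E1 n (i + 1) ∧ E2 n i ≠ E2 n (i + 1) ∧
        E1 n (i + 1) ≠ E2 n (i + 1) ∧ E1 n i ≠ E2 n i := by
      have si := shape hn hi
      have sj := shape hn hj
      simp only [Q] at hq
      omega
    rw [tau, tau, Equiv.swap_comm (fn n (E1 n i)) (fn n (E2 n i)), key.1]
    exact CoxA.swap_braid (fn_ne bi.2.1 bj.1 key.2.1)
      (fn_ne bi.2.1 bj.2.1 key.2.2.1) (fn_ne bj.1 bj.2.1 key.2.2.2.1)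
  · -- pattern E2 i = E1 j
    have key : E2 n i = E1 n j ∧ E1 n i ≠ E1 n j ∧ E1 n i ≠ E2 n j ∧ E2 n i ≠ E2 n j ∧
        E1 n i ≠ E2 n i ∧ E1 n j ≠ E2 n j := by
      have si := shape hn hi
      have sj := shape hn hj
      simp only [Q] at hq
      omega
    rw [tau, tau, key.1]
    exact CoxA.swap_braid (fn_ne bi.1 bj.1 (key.1 ▸ key.2.2.2.2.1))
      (fn_ne bi.1 bj.2.1 key.2.2.1) (fn_ne bj.1 bj.2.1 key.2.2.2.2.2)

set_option maxHeartbeats 1000000 in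
lemma tau_comm (hn : 3 ≤ n) {i j : ℕ} (hi : mem n i) (hj : mem n j) (hne : i ≠ j)
    (hnE : ¬ inE n i j) : Commute (tau n i) (tau n j) := by
  have bi := Ebound hn hi
  have bj := Ebound hn hj
  have key : E1 n i ≠ E1 n j ∧ E1 n i ≠ E2 n j ∧ E2 n i ≠ E1 n j ∧ E2 n i ≠ E2 n j := by
    obtain h|h|h|h|h|h|h := shape hn hi <;> obtain g|g|g|g|g|g|g := shape hn hj
    · omega
    · exact absurd (inE_of_Q hn (Or.inl (Or.inl ⟨by omega, by omega, by omega, by omega⟩))) hnE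
    · exact absurd (inE_of_Q hn (Or.inl (Or.inr (Or.inl ⟨by omega, by omega, by omega, by omega⟩)))) hnE
    · omega
    · omega
    · omega
    · omega
    · exact absurd (inE_of_Q hn (Or.inr (Or.inl ⟨by omega, by omega, by omega, by omega⟩))) hnE
    · omega
    · exact absurd (inE_of_Q hn (Or.inl (Or.inr (Or.inr (Or.inl ⟨by omega, by omega, by omega, by omega⟩))))) hnE
    · omega
    · omega
    · have hx : j ≠ 5 := fun hc => hnE (inE_of_Q hn (Or.inl (Or.inl ⟨by omega, by omega, by omega, by omega⟩)))
      omega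
    · have hx : j ≠ 6 := fun hc => hnE (inE_of_Q hn (Or.inl (Or.inr (Or.inl ⟨by omega, by omega, by omega, by omega⟩))))
      omega
    · exact absurd (inE_of_Q hn (Or.inr (Or.inr (Or.inl ⟨by omega, by omega, by omega, by omega⟩)))) hnE
    · exact absurd (inE_of_Q hn (Or.inr (Or.inr (Or.inr (Or.inl ⟨by omega, by omega, by omega, by omega⟩))))) hnE
    · omega
    · exact absurd (inE_of_Q hn (Or.inl (Or.inr (Or.inr (Or.inr (Or.inl ⟨by omega, by omega⟩)))))) hnE
    · omega
    · omega
    · omega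
    · omega
    · omega
    · exact absurd (inE_of_Q hn (Or.inr (Or.inr (Or.inr (Or.inr (Or.inl ⟨by omega, by omega⟩)))))) hnE
    · omega
    · omega
    · omega
    · omega
    · omega
    · omega
    · omega
    · omega
    · omega
    · have hx : j ≠ 2 * n - 1 := fun hc => hnE (inE_of_Q hn (Or.inr (Or.inr (Or.inr (Or.inr (Or.inr ⟨by omega, by omega⟩))))))
      omega
    · omega
    · omega
    · have hx : i ≠ 5 := fun hc => hnE (inE_of_Q hn (Or.inr (Or.inl ⟨by omega, by omega, by omega, by omega⟩)))
      omega
    · omega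
    · omega
    · have hx : i ≠ 2 * n - 1 := fun hc => hnE (inE_of_Q hn (Or.inl (Or.inr (Or.inr (Or.inr (Or.inr ⟨by omega, by omega⟩))))))
      omega
    · have hx1 : j ≠ i + 2 := fun hc => hnE (inE_of_Q hn (Or.inl (Or.inl ⟨by omega, by omega, by omega, by omega⟩)))
      have hx2 : i ≠ j + 2 := fun hc => hnE (inE_of_Q hn (Or.inr (Or.inl ⟨by omega, by omega, by omega, by omega⟩)))
      omega
    · have hx1 : j ≠ i + 1 := fun hc => hnE (inE_of_Q hn (Or.inl (Or.inr (Or.inr (Or.inl ⟨by omega, by omega, by omega, by omega⟩)))))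
      have hx2 : j ≠ i + 3 := fun hc => hnE (inE_of_Q hn (Or.inl (Or.inr (Or.inl ⟨by omega, by omega, by omega, by omega⟩))))
      omega
    · omega
    · have hx : i ≠ 6 := fun hc => hnE (inE_of_Q hn (Or.inr (Or.inr (Or.inl ⟨by omega, by omega, by omega, by omega⟩))))
      omega
    · omega
    · omega
    · omega
    · have hx1 : i ≠ j + 1 := fun hc => hnE (inE_of_Q hn (Or.inr (Or.inr (Or.inr (Or.inl ⟨by omega, by omega, by omega, by omega⟩)))))
      have hx2 : i ≠ j + 3 := fun hc => hnE (inE_of_Q hn (Or.inr (Or.inr (Or.inl ⟨by omega, by omega, by omega, by omega⟩))))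
      omega
    · omega
  exact CoxA.swap_commute (fn_ne bi.1 bj.1 key.1) (fn_ne bi.1 bj.2.1 key.2.1)
    (fn_ne bi.2.1 bj.1 key.2.2.1) (fn_ne bi.2.1 bj.2.1 key.2.2.2)

lemma tau_star1 (hn : 3 ≤ n) : Commute (tau n 1) (tau n 4 * tau n 3 * tau n 4) := by
  have e11 : E1 n 1 = 0 := by simp [E1]
  have e21 : E2 n 1 = 1 := by simp [E2]
  have e13 : E1 n 3 = 1 := by simp [E1]
  have e23 : E2 n 3 = 4 := by simp [E2]
  have e14 : E1 n 4 = 1 := by simp [E1]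
  have e24 : E2 n 4 = 2 := by simp [E2]
  have hb : ∀ a, a ≤ 5 → a < 2 * n + 2 := by omega
  rw [tau, tau, tau, e11, e21, e13, e23, e14, e24]
  rw [Equiv.swap_comm (fn n 1) (fn n 2)]
  rw [CoxA.swap_conj (fn_ne (hb 2 (by norm_num)) (hb 1 (by norm_num)) (by norm_num))
    (fn_ne (hb 2 (by norm_num)) (hb 4 (by norm_num)) (by norm_num))
    (fn_ne (hb 1 (by norm_num)) (hb 4 (by norm_num)) (by norm_num))]
  exact CoxA.swap_commute (fn_ne (hb 0 (by norm_num)) (hb 2 (by norm_num)) (by norm_num))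
    (fn_ne (hb 0 (by norm_num)) (hb 4 (by norm_num)) (by norm_num))
    (fn_ne (hb 1 (by norm_num)) (hb 2 (by norm_num)) (by norm_num))
    (fn_ne (hb 1 (by norm_num)) (hb 4 (by norm_num)) (by norm_num))

lemma tau_stark (hn : 3 ≤ n) {k : ℕ} (h2 : 2 ≤ k) (hk : k ≤ n - 1) :
    Commute (tau n (2 * k + 2)) (tau n (2 * k - 1) * tau n (2 * k + 1) * tau n (2 * k - 1)) := by
  have hmb : mem n (2 * k - 1) := Or.inr ⟨by omega, by omega⟩
  have hmc : mem n (2 * k + 1) := Or.inr ⟨by omega, by omega⟩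
  have hma : mem n (2 * k + 2) := Or.inr ⟨by omega, by omega⟩
  have bb := Ebound hn hmb
  have bc := Ebound hn hmc
  have ba := Ebound hn hma
  have key : E2 n (2 * k - 1) = E1 n (2 * k + 1) ∧
      E1 n (2 * k - 1) ≠ E2 n (2 * k + 1) ∧
      E1 n (2 * k + 2) ≠ E1 n (2 * k - 1) ∧ E1 n (2 * k + 2) ≠ E2 n (2 * k + 1) ∧
      E2 n (2 * k + 2) ≠ E1 n (2 * k - 1) ∧ E2 n (2 * k + 2) ≠ E2 n (2 * k + 1) := by
    have sb := shape hn hmb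
    have sc := shape hn hmc
    have sa := shape hn hma
    omega
  rw [tau, tau, tau, ← key.1]
  rw [CoxA.swap_conj (fn_ne bb.1 bb.2.1 bb.2.2) (fn_ne bb.1 bc.2.1 key.2.1)
    (fn_ne bb.2.1 bc.2.1 (key.1 ▸ bc.2.2))]
  exact CoxA.swap_commute (fn_ne ba.1 bb.1 key.2.2.1) (fn_ne ba.1 bc.2.1 key.2.2.2.1)
    (fn_ne ba.2.1 bb.1 key.2.2.2.2.1) (fn_ne ba.2.1 bc.2.1 key.2.2.2.2.2)

lemma lift_commR' {α : Type*} {G : Type*} [Group G] (ph : α → G) (u v : FreeGroup α) :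
    FreeGroup.lift ph (commR u v)
      = FreeGroup.lift ph u * FreeGroup.lift ph v * (FreeGroup.lift ph u)⁻¹ *
        (FreeGroup.lift ph v)⁻¹ := by
  simp only [commR, map_mul, map_inv]

lemma comm_relator_eq_one {G : Type*} [Group G] {x y : G} (h : Commute x y) :
    x * y * x⁻¹ * y⁻¹ = 1 := by
  rw [h.eq]; group

/-- The homomorphism `H n →* S_{2n+2}`. -/
def F (hn : 3 ≤ n) : H n →* Equiv.Perm (Fin (2 * n + 2)) :=
  PresentedGroup.toGroup (f := fun a : Idx n => tau n a.1) (by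
    rintro r ((((⟨a, rfl⟩ | ⟨a, b, hE, rfl⟩) | ⟨a, b, hne, hnE, rfl⟩) |
      ⟨a, b, c, ha, hb, hc, rfl⟩) | ⟨k, hk2, hk1, a, b, c, ha, hb, hc, rfl⟩)
    · rw [CoxA.lift_sq]
      exact Equiv.swap_mul_self _ _
    · rw [CoxA.lift_braidR, mul_inv_eq_one]
      rcases (inE_iff hn a.1 b.1).1 hE with hq | hq
      · exact tau_braid hn a.2 b.2 hq
      · exact (tau_braid hn b.2 a.2 hq).symm
    · rw [CoxA.lift_commR, mul_inv_eq_one, mul_inv_eq_iff_eq_mul]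
      exact tau_comm hn a.2 b.2 hne hnE
    · rw [lift_commR']
      simp only [map_mul, FreeGroup.lift_apply_of]
      rw [ha, hb, hc]
      exact comm_relator_eq_one (tau_star1 hn)
    · rw [lift_commR']
      simp only [map_mul, FreeGroup.lift_apply_of]
      rw [ha, hb, hc]
      exact comm_relator_eq_one (tau_stark hn hk2 hk1))

lemma F_X (hn : 3 ≤ n) {i : ℕ} (hi : mem n i) : F hn (X n i) = tau n i := by
  rw [X_of hi]
  exact PresentedGroup.toGroup.of _

section GroupHelpers

variable {G : Type*} [Group G] {a b c d e g : G}

lemma conj_comm_inv (h : g * d = d * g) (hd : d * d = 1) : d * g * d = g := by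
  rw [← h, mul_assoc, hd, mul_one]

lemma sq_conj (ha : a * a = 1) (hc : c * c = 1) : (a * c * a) * (a * c * a) = 1 := by
  calc (a * c * a) * (a * c * a) = a * (c * ((a * a) * c)) * a := by group
    _ = a * (c * c) * a := by rw [ha, one_mul]
    _ = 1 := by rw [hc, mul_one, ha]

lemma star_sym (hb : b * b = 1) (h : c * (b * a * b) = (b * a * b) * c) :
    a * (b * c * b) = (b * c * b) * a := by
  have key : (b * c * b) * a = a * (b * c * b) := by
    calc (b * c * b) * a = (b * c * b) * a * (b * b) := by rw [hb, mul_one]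
      _ = b * (c * (b * a * b)) * b := by group
      _ = b * ((b * a * b) * c) * b := by rw [h]
      _ = (b * b) * (a * (b * c * b)) := by group
      _ = a * (b * c * b) := by rw [hb, one_mul]
  exact key.symm

lemma braid1 (hd : d * d = 1) (hgd : g * d = d * g) (hge : g * e * g = e * g * e) :
    g * (d * e * d) * g = (d * e * d) * g * (d * e * d) := by
  have hR : (d * e * d) * g * (d * e * d) = d * (e * g * e) * d := by
    calc (d * e * d) * g * (d * e * d) = d * e * (d * g * d) * (e * d) := by group
      _ = d * e * g * (e * d) := by rw [conj_comm_inv hgd hd]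
      _ = d * (e * g * e) * d := by group
  calc g * (d * e * d) * g = (g * d) * e * (d * g) := by group
    _ = (d * g) * e * (d * g) := by rw [hgd]
    _ = (d * g) * e * (g * d) := congrArg (fun x => (d * g) * e * x) hgd.symm
    _ = d * (g * e * g) * d := by group
    _ = d * (e * g * e) * d := by rw [hge]
    _ = (d * e * d) * g * (d * e * d) := hR.symm

lemma braid2 (ha : a * a = 1) (had : a * d * a = d * a * d)
    (hae : a * e = e * a) (hde : d * e * d = e * d * e) :
    a * (d * e * d) * a = (d * e * d) * a * (d * e * d) := by
  have hL : a * (d * e * d) * a = (d * a * d) * e * (d * a * d) := by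
    calc a * (d * e * d) * a = a * d * ((a * a) * e * (a * a)) * (d * a) := by
          rw [ha]; group
      _ = (a * d * a) * (a * e * a) * (a * d * a) := by group
      _ = (a * d * a) * e * (a * d * a) := by rw [conj_comm_inv hae.symm ha]
      _ = (d * a * d) * e * (d * a * d) := by rw [had]
  have hR : (d * e * d) * a * (d * e * d) = (d * a * d) * e * (d * a * d) := by
    calc (d * e * d) * a * (d * e * d) = d * e * (d * a * d) * (e * d) := by group
      _ = d * e * (a * d * a) * (e * d) := by rw [← had]
      _ = d * (e * a) * d * ((a * e) * d) := by group
      _ = d * (a * e) * d * ((a * e) * d) := by rw [← hae]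
      _ = d * (a * e) * d * ((e * a) * d) := congrArg (fun x => d * (a * e) * d * (x * d)) hae
      _ = (d * a) * (e * d * e) * (a * d) := by group
      _ = (d * a) * (d * e * d) * (a * d) := by rw [← hde]
      _ = (d * a * d) * e * (d * a * d) := by group
  rw [hL, hR]

lemma conj_braid (ha : a * a = 1) (hag : a * g = g * a) (hcg : c * g * c = g * c * g) :
    (a * c * a) * g * (a * c * a) = g * (a * c * a) * g := by
  calc (a * c * a) * g * (a * c * a) = a * c * (a * g * a) * (c * a) := by group
    _ = a * c * g * (c * a) := by rw [conj_comm_inv hag.symm ha]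
    _ = a * (c * g * c) * a := by group
    _ = a * (g * c * g) * a := by rw [hcg]
    _ = (a * g) * c * (g * a) := by group
    _ = (g * a) * c * (g * a) := by rw [hag]
    _ = (g * a) * c * (a * g) := congrArg (fun x => (g * a) * c * x) hag.symm
    _ = g * (a * c * a) * g := by group

lemma comm_conj (ha : a * a = 1) (hd : d * d = 1) (had : a * d * a = d * a * d)
    (hae : a * e = e * a) :
    d * (a * (d * e * d) * a) = (a * (d * e * d) * a) * d := by
  have h1 : d * (a * (d * e * d) * a) * d = a * (d * e * d) * a := by
    calc d * (a * (d * e * d) * a) * d = (d * a * d) * e * (d * a * d) := by group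
      _ = (a * d * a) * e * (a * d * a) := by rw [← had]
      _ = a * d * (a * e * a) * (d * a) := by group
      _ = a * d * e * (d * a) := by rw [conj_comm_inv hae.symm ha]
      _ = a * (d * e * d) * a := by group
  calc d * (a * (d * e * d) * a) = (d * (a * (d * e * d) * a) * d) * d := by
        rw [mul_assoc (d * (a * (d * e * d) * a)) d d, hd, mul_one]
    _ = (a * (d * e * d) * a) * d := by rw [h1]

lemma selfconj_braid (ha : a * a = 1) (hc : c * c = 1) (h : a * c * a = c * a * c) :
    a * (a * c * a) * a = (a * c * a) * a * (a * c * a) := by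
  have hL : a * (a * c * a) * a = c := by
    calc a * (a * c * a) * a = (a * a) * c * (a * a) := by group
      _ = c := by rw [ha, one_mul, mul_one]
  have hR : (a * c * a) * a * (a * c * a) = c := by
    calc (a * c * a) * a * (a * c * a) = (a * c * a) * ((a * a) * (c * a)) := by group
      _ = (a * c * a) * (c * a) := by rw [ha, one_mul]
      _ = (c * a * c) * (c * a) := by rw [h]
      _ = c * a * (c * c) * a := by group
      _ = c := by rw [hc, mul_one, mul_assoc, ha, mul_one]
  rw [hL, hR]

end GroupHelpers

/-- The images in `H n` of the standard Coxeter generators of `S_{2n+2}`. -/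
noncomputable def w (n : ℕ) (i : ℕ) : H n :=
  if i = 0 then X n 1 else if i = 1 then X n 4 else if i = 2 then X n (2 * n + 1)
  else if i = 3 then X n (2 * n + 1) * (X n 4 * X n 3 * X n 4) * X n (2 * n + 1)
  else if i % 2 = 0 then X n (i + 2) else X n (i + 1) * X n i * X n (i + 1)

lemma w0 : w n 0 = X n 1 := rfl
lemma w1 : w n 1 = X n 4 := rfl
lemma w2 : w n 2 = X n (2 * n + 1) := rfl
lemma w3 : w n 3 = X n (2 * n + 1) * (X n 4 * X n 3 * X n 4) * X n (2 * n + 1) := rfl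

lemma w_even {i : ℕ} (h4 : 4 ≤ i) (he : i % 2 = 0) : w n i = X n (i + 2) := by
  rw [w, if_neg (by omega), if_neg (by omega), if_neg (by omega), if_neg (by omega), if_pos he]

lemma w_odd {i : ℕ} (h5 : 5 ≤ i) (ho : i % 2 = 1) :
    w n i = X n (i + 1) * X n i * X n (i + 1) := by
  rw [w, if_neg (by omega), if_neg (by omega), if_neg (by omega), if_neg (by omega),
    if_neg (by omega)]

lemma w_sq (hn : 3 ≤ n) {i : ℕ} (hi : i ≤ 2 * n) : w n i * w n i = 1 := by
  have m1 : mem n 1 := Or.inl rfl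
  have m3 : mem n 3 := Or.inr ⟨by omega, by omega⟩
  have m4 : mem n 4 := Or.inr ⟨by omega, by omega⟩
  have mtop : mem n (2 * n + 1) := Or.inr ⟨by omega, by omega⟩
  rcases eq_or_ne i 0 with rfl | h0
  · rw [w0]; exact Xsq m1
  rcases eq_or_ne i 1 with rfl | h1
  · rw [w1]; exact Xsq m4
  rcases eq_or_ne i 2 with rfl | h2
  · rw [w2]; exact Xsq mtop
  rcases eq_or_ne i 3 with rfl | h3
  · rw [w3]; exact sq_conj (Xsq mtop) (sq_conj (Xsq m4) (Xsq m3))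
  rcases Nat.even_or_odd i with he | ho
  · rw [Nat.even_iff] at he
    rw [w_even (by omega) he]
    exact Xsq (Or.inr ⟨by omega, by omega⟩)
  · rw [Nat.odd_iff] at ho
    rw [w_odd (by omega) ho]
    exact sq_conj (Xsq (Or.inr ⟨by omega, by omega⟩)) (Xsq (Or.inr ⟨by omega, by omega⟩))

lemma w_braid (hn : 3 ≤ n) {i : ℕ} (hi : i + 1 ≤ 2 * n) :
    w n i * w n (i + 1) * w n i = w n (i + 1) * w n i * w n (i + 1) := by
  have m1 : mem n 1 := Or.inl rfl
  have m3 : mem n 3 := Or.inr ⟨by omega, by omega⟩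
  have m4 : mem n 4 := Or.inr ⟨by omega, by omega⟩
  have m5 : mem n 5 := Or.inr ⟨by omega, by omega⟩
  have m6 : mem n 6 := Or.inr ⟨by omega, by omega⟩
  have mt : mem n (2 * n + 1) := Or.inr ⟨by omega, by omega⟩
  rcases eq_or_ne i 0 with rfl | h0
  · rw [show (0:ℕ) + 1 = 1 from rfl, w0, w1]
    exact Xbraid m1 m4 (inE_of_Q hn (Or.inl (Or.inr (Or.inl
      ⟨by omega, by omega, by omega, by omega⟩))))
  rcases eq_or_ne i 1 with rfl | h1
  · rw [show (1:ℕ) + 1 = 2 from rfl, w1, w2]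
    exact Xbraid m4 mt (inE_of_Q hn (Or.inl (Or.inr (Or.inr (Or.inr (Or.inl
      ⟨by omega, by omega⟩))))))
  rcases eq_or_ne i 2 with rfl | h2
  · rw [show (2:ℕ) + 1 = 3 from rfl, w2, w3]
    exact selfconj_braid (Xsq mt) (sq_conj (Xsq m4) (Xsq m3))
      (braid2 (Xsq mt)
        (Xbraid mt m4 (inE_of_Q hn (Or.inr (Or.inr (Or.inr (Or.inr (Or.inl
          ⟨by omega, by omega⟩)))))))
        ((Xcomm mt m3 (by omega) (not_inE hn (by simp only [Q]; omega))).eq)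
        (Xbraid m4 m3 (inE_of_Q hn (Or.inr (Or.inr (Or.inr (Or.inl
          ⟨by omega, by omega, by omega, by omega⟩)))))))
  rcases eq_or_ne i 3 with rfl | h3
  · rw [show (3:ℕ) + 1 = 4 from rfl, w3, w_even (by omega) (by omega),
      show (4:ℕ) + 2 = 6 from rfl]
    exact conj_braid (Xsq mt) ((Xcomm mt m6 (by omega) (not_inE hn (by
        simp only [Q]; omega))).eq)
      ((braid1 (Xsq m4) ((Xcomm m6 m4 (by omega) (not_inE hn (by
          simp only [Q]; omega))).eq)
        (Xbraid m6 m3 (inE_of_Q hn (Or.inr (Or.inr (Or.inl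
          ⟨by omega, by omega, by omega, by omega⟩)))))).symm)
  rcases Nat.even_or_odd i with he | ho
  · rw [Nat.even_iff] at he
    have h4i : 4 ≤ i := by omega
    have mA : mem n (i + 2) := Or.inr ⟨by omega, by omega⟩
    have mB : mem n (i + 1) := Or.inr ⟨by omega, by omega⟩
    rw [w_even h4i he, w_odd (i := i + 1) (by omega) (by omega),
      show i + 1 + 1 = i + 2 from rfl]
    exact selfconj_braid (Xsq mA) (Xsq mB)
      (Xbraid mA mB (inE_of_Q hn (Or.inr (Or.inr (Or.inr (Or.inl
        ⟨by omega, by omega, by omega, by omega⟩))))))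
  · rw [Nat.odd_iff] at ho
    have h5i : 5 ≤ i := by omega
    have mA : mem n (i + 1) := Or.inr ⟨by omega, by omega⟩
    have mB : mem n i := Or.inr ⟨by omega, by omega⟩
    have mC : mem n (i + 3) := Or.inr ⟨by omega, by omega⟩
    rw [w_odd h5i ho, w_even (i := i + 1) (by omega) (by omega),
      show i + 1 + 2 = i + 3 from rfl]
    have hE : inE n i (i + 3) := by
      rcases Nat.lt_or_ge i (2 * n - 2) with h | h
      · exact inE_of_Q hn (Or.inl (Or.inr (Or.inl ⟨by omega, by omega, by omega, by omega⟩)))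
      · exact inE_of_Q hn (Or.inl (Or.inr (Or.inr (Or.inr (Or.inr ⟨by omega, by omega⟩)))))
    exact conj_braid (Xsq mA) ((Xcomm mA mC (by omega) (not_inE hn (by
        simp only [Q]; omega))).eq)
      (Xbraid mB mC hE)

lemma commX_w (hn : 3 ≤ n) {x j : ℕ} (h4 : 4 ≤ j) (hj : j ≤ 2 * n)
    (he : j % 2 = 0 → Commute (X n x) (X n (j + 2)))
    (ho1 : j % 2 = 1 → Commute (X n x) (X n (j + 1)))
    (ho2 : j % 2 = 1 → Commute (X n x) (X n j)) :
    Commute (X n x) (w n j) := by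
  rcases Nat.even_or_odd j with hp | hp
  · rw [Nat.even_iff] at hp
    rw [w_even h4 hp]
    exact he hp
  · rw [Nat.odd_iff] at hp
    rw [w_odd (by omega) hp]
    exact ((ho1 hp).mul_right (ho2 hp)).mul_right (ho1 hp)

lemma w_comm (hn : 3 ≤ n) {i j : ℕ} (hij : i + 2 ≤ j) (hj : j ≤ 2 * n) :
    Commute (w n i) (w n j) := by
  have m1 : mem n 1 := Or.inl rfl
  have m3 : mem n 3 := Or.inr ⟨by omega, by omega⟩
  have m4 : mem n 4 := Or.inr ⟨by omega, by omega⟩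
  have m5 : mem n 5 := Or.inr ⟨by omega, by omega⟩
  have m6 : mem n 6 := Or.inr ⟨by omega, by omega⟩
  have mt : mem n (2 * n + 1) := Or.inr ⟨by omega, by omega⟩
  rcases eq_or_ne i 0 with rfl | h0
  · rw [w0]
    rcases eq_or_ne j 2 with rfl | hj2
    · rw [w2]
      exact Xcomm m1 mt (by omega) (not_inE hn (by simp only [Q]; omega))
    rcases eq_or_ne j 3 with rfl | hj3
    · rw [w3]
      have ha : Commute (X n 1) (X n (2 * n + 1)) :=
        Xcomm m1 mt (by omega) (not_inE hn (by simp only [Q]; omega))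
      exact (ha.mul_right (Xstar1 hn)).mul_right ha
    · exact commX_w hn (by omega) hj
        (fun hp => Xcomm m1 (Or.inr ⟨by omega, by omega⟩) (by omega)
          (not_inE hn (by simp only [Q]; omega)))
        (fun hp => Xcomm m1 (Or.inr ⟨by omega, by omega⟩) (by omega)
          (not_inE hn (by simp only [Q]; omega)))
        (fun hp => Xcomm m1 (Or.inr ⟨by omega, by omega⟩) (by omega)
          (not_inE hn (by simp only [Q]; omega)))
  rcases eq_or_ne i 1 with rfl | h1
  · rw [w1]
    rcases eq_or_ne j 3 with rfl | hj3
    · rw [w3]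
      exact comm_conj (Xsq mt) (Xsq m4)
        (Xbraid mt m4 (inE_of_Q hn (Or.inr (Or.inr (Or.inr (Or.inr (Or.inl
          ⟨by omega, by omega⟩)))))))
        ((Xcomm mt m3 (by omega) (not_inE hn (by simp only [Q]; omega))).eq)
    · exact commX_w hn (by omega) hj
        (fun hp => Xcomm m4 (Or.inr ⟨by omega, by omega⟩) (by omega)
          (not_inE hn (by simp only [Q]; omega)))
        (fun hp => Xcomm m4 (Or.inr ⟨by omega, by omega⟩) (by omega)
          (not_inE hn (by simp only [Q]; omega)))
        (fun hp => Xcomm m4 (Or.inr ⟨by omega, by omega⟩) (by omega)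
          (not_inE hn (by simp only [Q]; omega)))
  rcases eq_or_ne i 2 with rfl | h2
  · rw [w2]
    exact commX_w hn (by omega) hj
      (fun hp => Xcomm mt (Or.inr ⟨by omega, by omega⟩) (by omega)
        (not_inE hn (by simp only [Q]; omega)))
      (fun hp => Xcomm mt (Or.inr ⟨by omega, by omega⟩) (by omega)
        (not_inE hn (by simp only [Q]; omega)))
      (fun hp => Xcomm mt (Or.inr ⟨by omega, by omega⟩) (by omega)
        (not_inE hn (by simp only [Q]; omega)))
  rcases eq_or_ne i 3 with rfl | h3
  · rw [w3]
    rcases eq_or_ne j 5 with rfl | hj5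
    · rw [w_odd (by omega) (by norm_num), show (5:ℕ) + 1 = 6 from rfl]
      have b56 : X n 5 * X n 6 * X n 5 = X n 6 * X n 5 * X n 6 :=
        Xbraid m5 m6 (inE_of_Q hn (Or.inl (Or.inr (Or.inr (Or.inl
          ⟨by omega, by omega, by omega, by omega⟩)))))
      have b35 : X n 3 * X n 5 * X n 3 = X n 5 * X n 3 * X n 5 :=
        Xbraid m3 m5 (inE_of_Q hn (Or.inl (Or.inl ⟨by omega, by omega, by omega, by omega⟩)))
      have hst := Xstar hn (k := 2) le_rfl (by omega)
      norm_num at hst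
      have h' := hst.eq
      rw [b35] at h'
      have h3W : Commute (X n 3) (X n 6 * X n 5 * X n 6) := by
        rw [← b56]
        exact star_sym (Xsq m5) h'
      have haW : Commute (X n (2 * n + 1)) (X n 6 * X n 5 * X n 6) := by
        have c1 : Commute (X n (2 * n + 1)) (X n 6) :=
          Xcomm mt m6 (by omega) (not_inE hn (by simp only [Q]; omega))
        have c2 : Commute (X n (2 * n + 1)) (X n 5) :=
          Xcomm mt m5 (by omega) (not_inE hn (by simp only [Q]; omega))
        exact (c1.mul_right c2).mul_right c1
      have h4W : Commute (X n 4) (X n 6 * X n 5 * X n 6) := by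
        have c1 : Commute (X n 4) (X n 6) :=
          Xcomm m4 m6 (by omega) (not_inE hn (by simp only [Q]; omega))
        have c2 : Commute (X n 4) (X n 5) :=
          Xcomm m4 m5 (by omega) (not_inE hn (by simp only [Q]; omega))
        exact (c1.mul_right c2).mul_right c1
      exact (haW.mul_left ((h4W.mul_left h3W).mul_left h4W)).mul_left haW
    · -- j ≥ 6 : letterwise
      have haW : Commute (X n (2 * n + 1)) (w n j) := commX_w hn (by omega) hj
        (fun hp => Xcomm mt (Or.inr ⟨by omega, by omega⟩) (by omega)
          (not_inE hn (by simp only [Q]; omega)))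
        (fun hp => Xcomm mt (Or.inr ⟨by omega, by omega⟩) (by omega)
          (not_inE hn (by simp only [Q]; omega)))
        (fun hp => Xcomm mt (Or.inr ⟨by omega, by omega⟩) (by omega)
          (not_inE hn (by simp only [Q]; omega)))
      have h4W : Commute (X n 4) (w n j) := commX_w hn (by omega) hj
        (fun hp => Xcomm m4 (Or.inr ⟨by omega, by omega⟩) (by omega)
          (not_inE hn (by simp only [Q]; omega)))
        (fun hp => Xcomm m4 (Or.inr ⟨by omega, by omega⟩) (by omega)
          (not_inE hn (by simp only [Q]; omega)))
        (fun hp => Xcomm m4 (Or.inr ⟨by omega, by omega⟩) (by omega)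
          (not_inE hn (by simp only [Q]; omega)))
      have h3W : Commute (X n 3) (w n j) := commX_w hn (by omega) hj
        (fun hp => Xcomm m3 (Or.inr ⟨by omega, by omega⟩) (by omega)
          (not_inE hn (by simp only [Q]; omega)))
        (fun hp => Xcomm m3 (Or.inr ⟨by omega, by omega⟩) (by omega)
          (not_inE hn (by simp only [Q]; omega)))
        (fun hp => Xcomm m3 (Or.inr ⟨by omega, by omega⟩) (by omega)
          (not_inE hn (by simp only [Q]; omega)))
      exact (haW.mul_left ((h4W.mul_left h3W).mul_left h4W)).mul_left haW
  rcases Nat.even_or_odd i with he | ho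
  · -- i even, i ≥ 4 : w i is a single generator
    rw [Nat.even_iff] at he
    rw [w_even (by omega) he]
    exact commX_w hn (by omega) hj
      (fun hp => Xcomm (Or.inr ⟨by omega, by omega⟩) (Or.inr ⟨by omega, by omega⟩) (by omega)
        (not_inE hn (by simp only [Q]; omega)))
      (fun hp => Xcomm (Or.inr ⟨by omega, by omega⟩) (Or.inr ⟨by omega, by omega⟩) (by omega)
        (not_inE hn (by simp only [Q]; omega)))
      (fun hp => Xcomm (Or.inr ⟨by omega, by omega⟩) (Or.inr ⟨by omega, by omega⟩) (by omega)
        (not_inE hn (by simp only [Q]; omega)))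
  · -- i odd, i ≥ 5
    rw [Nat.odd_iff] at ho
    have h5i : 5 ≤ i := by omega
    have mi : mem n i := Or.inr ⟨by omega, by omega⟩
    have mi1 : mem n (i + 1) := Or.inr ⟨by omega, by omega⟩
    rcases eq_or_ne j (i + 2) with rfl | hne2
    · -- j = i + 2 : the delicate case, uses the star relation
      have mi2 : mem n (i + 2) := Or.inr ⟨by omega, by omega⟩
      have mi3 : mem n (i + 3) := Or.inr ⟨by omega, by omega⟩
      rw [w_odd h5i ho, w_odd (i := i + 2) (by omega) (by omega),
        show i + 2 + 1 = i + 3 from rfl]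
      have bpp' : X n i * X n (i + 2) * X n i = X n (i + 2) * X n i * X n (i + 2) :=
        Xbraid mi mi2 (inE_of_Q hn (Or.inl (Or.inl ⟨by omega, by omega, by omega, by omega⟩)))
      have bp'q' : X n (i + 2) * X n (i + 3) * X n (i + 2)
          = X n (i + 3) * X n (i + 2) * X n (i + 3) :=
        Xbraid mi2 mi3 (inE_of_Q hn (Or.inl (Or.inr (Or.inr (Or.inl
          ⟨by omega, by omega, by omega, by omega⟩)))))
      obtain ⟨k, hk2, hkn, e1, e2, e3⟩ :
          ∃ k, 2 ≤ k ∧ k ≤ n - 1 ∧ 2 * k - 1 = i ∧ 2 * k + 1 = i + 2 ∧ 2 * k + 2 = i + 3 :=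
        ⟨(i + 1) / 2, by omega, by omega, by omega, by omega, by omega⟩
      have hst := Xstar hn hk2 hkn
      rw [e1, e2, e3] at hst
      rw [bpp'] at hst
      have h2 : Commute (X n i) (X n (i + 2) * X n (i + 3) * X n (i + 2)) :=
        star_sym (Xsq mi2) hst.eq
      rw [bp'q'] at h2
      have h1 : Commute (X n (i + 1)) (X n (i + 3) * X n (i + 2) * X n (i + 3)) := by
        have c1 : Commute (X n (i + 1)) (X n (i + 3)) :=
          Xcomm mi1 mi3 (by omega) (not_inE hn (by simp only [Q]; omega))
        have c2 : Commute (X n (i + 1)) (X n (i + 2)) :=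
          Xcomm mi1 mi2 (by omega) (not_inE hn (by simp only [Q]; omega))
        exact (c1.mul_right c2).mul_right c1
      exact (h1.mul_left h2).mul_left h1
    · -- j ≥ i + 3 : letterwise
      rw [w_odd h5i ho]
      have hBW : Commute (X n i) (w n j) := commX_w hn (by omega) hj
        (fun hp => Xcomm mi (Or.inr ⟨by omega, by omega⟩) (by omega)
          (not_inE hn (by simp only [Q]; omega)))
        (fun hp => Xcomm mi (Or.inr ⟨by omega, by omega⟩) (by omega)
          (not_inE hn (by simp only [Q]; omega)))
        (fun hp => Xcomm mi (Or.inr ⟨by omega, by omega⟩) (by omega)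
          (not_inE hn (by simp only [Q]; omega)))
      have hPW : Commute (X n (i + 1)) (w n j) := commX_w hn (by omega) hj
        (fun hp => Xcomm mi1 (Or.inr ⟨by omega, by omega⟩) (by omega)
          (not_inE hn (by simp only [Q]; omega)))
        (fun hp => Xcomm mi1 (Or.inr ⟨by omega, by omega⟩) (by omega)
          (not_inE hn (by simp only [Q]; omega)))
        (fun hp => Xcomm mi1 (Or.inr ⟨by omega, by omega⟩) (by omega)
          (not_inE hn (by simp only [Q]; omega)))
      exact (hPW.mul_left hBW).mul_left hPW

/-- The homomorphism from the type-A Coxeter presentation to `H n`. -/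
noncomputable def psi (hn : 3 ≤ n) : CoxA.C (2 * n + 1) →* H n :=
  PresentedGroup.toGroup (f := fun i : Fin (2 * n + 1) => w n i) (by
    rintro r ((⟨i, rfl⟩ | ⟨i, j, hij, rfl⟩) | ⟨i, j, hij, rfl⟩)
    · rw [CoxA.lift_sq]
      exact w_sq hn (by have := i.isLt; omega)
    · rw [CoxA.lift_braidR, mul_inv_eq_one, ← hij]
      exact w_braid hn (by have := j.isLt; omega)
    · rw [CoxA.lift_commR, mul_inv_eq_one, mul_inv_eq_iff_eq_mul]
      exact (w_comm hn hij (by have := j.isLt; omega)).eq)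

lemma psi_s (hn : 3 ≤ n) (i : Fin (2 * n + 1)) : psi hn (CoxA.s i) = w n (i : ℕ) :=
  PresentedGroup.toGroup.of _

lemma F_w (hn : 3 ≤ n) {m : ℕ} (hm : m ≤ 2 * n) :
    F hn (w n m) = Equiv.swap (fn n m) (fn n (m + 1)) := by
  have m1 : mem n 1 := Or.inl rfl
  have m3 : mem n 3 := Or.inr ⟨by omega, by omega⟩
  have m4 : mem n 4 := Or.inr ⟨by omega, by omega⟩
  have mt : mem n (2 * n + 1) := Or.inr ⟨by omega, by omega⟩
  have hb : ∀ a : ℕ, a ≤ 2 * n + 1 → a < 2 * n + 2 := by omega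
  rcases eq_or_ne m 0 with rfl | h0
  · rw [w0, F_X hn m1, tau, show E1 n 1 = 0 from by simp [E1],
      show E2 n 1 = 1 from by simp [E2]]
  rcases eq_or_ne m 1 with rfl | h1
  · rw [w1, F_X hn m4, tau, show E1 n 4 = 1 from by simp [E1],
      show E2 n 4 = 2 from by simp [E2]]
  rcases eq_or_ne m 2 with rfl | h2
  · rw [w2, F_X hn mt, tau, show E1 n (2 * n + 1) = 2 from by have := shape hn mt; omega,
      show E2 n (2 * n + 1) = 3 from by have := shape hn mt; omega]
  rcases eq_or_ne m 3 with rfl | h3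
  · rw [w3, map_mul, map_mul, map_mul, map_mul, F_X hn mt, F_X hn m4, F_X hn m3,
      tau, tau, tau,
      show E1 n (2 * n + 1) = 2 from by have := shape hn mt; omega,
      show E2 n (2 * n + 1) = 3 from by have := shape hn mt; omega,
      show E1 n 4 = 1 from by simp [E1], show E2 n 4 = 2 from by simp [E2],
      show E1 n 3 = 1 from by simp [E1], show E2 n 3 = 4 from by simp [E2]]
    rw [Equiv.swap_comm (fn n 1) (fn n 2),
      CoxA.swap_conj (fn_ne (hb 2 (by omega)) (hb 1 (by omega)) (by omega))
        (fn_ne (hb 2 (by omega)) (hb 4 (by omega)) (by omega))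
        (fn_ne (hb 1 (by omega)) (hb 4 (by omega)) (by omega)),
      Equiv.swap_comm (fn n 2) (fn n 3),
      CoxA.swap_conj (fn_ne (hb 3 (by omega)) (hb 2 (by omega)) (by omega))
        (fn_ne (hb 3 (by omega)) (hb 4 (by omega)) (by omega))
        (fn_ne (hb 2 (by omega)) (hb 4 (by omega)) (by omega))]
  rcases Nat.even_or_odd m with hp | hp
  · rw [Nat.even_iff] at hp
    have mm : mem n (m + 2) := Or.inr ⟨by omega, by omega⟩
    rw [w_even (by omega) hp, F_X hn mm, tau,
      show E1 n (m + 2) = m from by have := shape hn mm; omega,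
      show E2 n (m + 2) = m + 1 from by have := shape hn mm; omega]
  · rw [Nat.odd_iff] at hp
    have mm : mem n m := Or.inr ⟨by omega, by omega⟩
    have mm1 : mem n (m + 1) := Or.inr ⟨by omega, by omega⟩
    rw [w_odd (by omega) hp, map_mul, map_mul, F_X hn mm1, F_X hn mm, tau, tau,
      show E1 n (m + 1) = m - 1 from by have := shape hn mm1; omega,
      show E2 n (m + 1) = m from by have := shape hn mm1; omega,
      show E1 n m = m - 1 from by have := shape hn mm; omega,
      show E2 n m = m + 1 from by have := shape hn mm; omega]
    rw [Equiv.swap_comm (fn n (m - 1)) (fn n m),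
      CoxA.swap_conj (fn_ne (hb m (by omega)) (hb (m - 1) (by omega)) (by omega))
        (fn_ne (hb m (by omega)) (hb (m + 1) (by omega)) (by omega))
        (fn_ne (hb (m - 1) (by omega)) (hb (m + 1) (by omega)) (by omega))]

lemma psi_surj (hn : 3 ≤ n) : Function.Surjective (psi hn) := by
  have m3 : mem n 3 := Or.inr ⟨by omega, by omega⟩
  have m4 : mem n 4 := Or.inr ⟨by omega, by omega⟩
  have mt : mem n (2 * n + 1) := Or.inr ⟨by omega, by omega⟩
  intro y
  have key : y ∈ (psi hn).range := by
    apply PresentedGroup.generated_by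
    intro a
    have ha : mem n a.1 := a.2
    rw [show (PresentedGroup.of a : H n) = X n a.1 from (X_of ha).symm]
    set m := a.1 with hmdef
    clear_value m
    rcases eq_or_ne m 1 with rfl | h1
    · exact ⟨CoxA.s ⟨0, by omega⟩, by rw [psi_s]; exact w0⟩
    rcases eq_or_ne m 4 with rfl | h4
    · exact ⟨CoxA.s ⟨1, by omega⟩, by rw [psi_s]; exact w1⟩
    rcases eq_or_ne m (2 * n + 1) with rfl | ht
    · exact ⟨CoxA.s ⟨2, by omega⟩, by rw [psi_s]; exact w2⟩
    rcases eq_or_ne m (2 * n + 2) with rfl | ht2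
    · refine ⟨CoxA.s ⟨2 * n, by omega⟩, ?_⟩
      rw [psi_s]
      show w n (2 * n) = _
      rw [w_even (by omega) (by omega)]
    rcases eq_or_ne m 3 with rfl | h3
    · refine ⟨CoxA.s ⟨1, by omega⟩ * CoxA.s ⟨2, by omega⟩ * CoxA.s ⟨3, by omega⟩ *
        CoxA.s ⟨2, by omega⟩ * CoxA.s ⟨1, by omega⟩, ?_⟩
      rw [map_mul, map_mul, map_mul, map_mul, psi_s, psi_s, psi_s]
      show w n 1 * w n 2 * w n 3 * w n 2 * w n 1 = X n 3
      rw [w1, w2, w3]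
      calc X n 4 * X n (2*n+1) * (X n (2*n+1) * (X n 4 * X n 3 * X n 4) * X n (2*n+1)) *
            X n (2*n+1) * X n 4
          = X n 4 * ((X n (2*n+1) * X n (2*n+1)) * (X n 4 * X n 3 * X n 4) *
            (X n (2*n+1) * X n (2*n+1))) * X n 4 := by group
        _ = X n 4 * ((1 : H n) * (X n 4 * X n 3 * X n 4) * 1) * X n 4 := by rw [Xsq mt]
        _ = (X n 4 * X n 4) * X n 3 * (X n 4 * X n 4) := by group
        _ = (1 : H n) * X n 3 * 1 := by rw [Xsq m4]
        _ = X n 3 := by group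
    rcases Nat.even_or_odd m with hp | hp
    · rw [Nat.even_iff] at hp
      have h6 : 6 ≤ m ∧ m ≤ 2 * n := by
        rcases ha with h | h
        · omega
        · omega
      refine ⟨CoxA.s ⟨m - 2, by omega⟩, ?_⟩
      rw [psi_s]
      show w n (m - 2) = _
      rw [w_even (by omega) (by omega), show m - 2 + 2 = m from by omega]
    · rw [Nat.odd_iff] at hp
      have h5 : 5 ≤ m ∧ m ≤ 2 * n - 1 := by
        rcases ha with h | h
        · omega
        · omega
      have mm1 : mem n (m + 1) := Or.inr ⟨by omega, by omega⟩
      refine ⟨CoxA.s ⟨m - 1, by omega⟩ * CoxA.s ⟨m, by omega⟩ * CoxA.s ⟨m - 1, by omega⟩, ?_⟩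
      rw [map_mul, map_mul, psi_s, psi_s]
      show w n (m - 1) * w n m * w n (m - 1) = X n m
      rw [w_even (by omega) (by omega), w_odd (by omega) hp, show m - 1 + 2 = m + 1 from by omega]
      calc X n (m+1) * (X n (m+1) * X n m * X n (m+1)) * X n (m+1)
          = (X n (m+1) * X n (m+1)) * X n m * (X n (m+1) * X n (m+1)) := by group
        _ = (1 : H n) * X n m * 1 := by rw [Xsq mm1]
        _ = X n m := by group
  exact key

end PartB


/-- For `n ≥ 3`, the group `G₁` attached to `R_{n+1} ∪ R_{n+1}` is isomorphic
to the symmetric group `S_{2n+2}`. -/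
theorem stmt10 (n : ℕ) (hn : 3 ≤ n) :
    Nonempty (PresentedGroup (Stmt10.rels n) ≃* Equiv.Perm (Fin (2 * n + 2))) := by
  have hcomp : (PartB.F hn).comp (PartB.psi hn) = CoxA.pi (2 * n + 1) := by
    apply PresentedGroup.ext
    intro i
    rw [MonoidHom.comp_apply,
      show (PresentedGroup.of i : CoxA.C (2 * n + 1)) = CoxA.s i from rfl,
      PartB.psi_s, CoxA.pi_s, PartB.F_w hn (by have := i.isLt; omega)]
    congr 1
    · exact Fin.ext (by
        show (i : ℕ) % (2 * n + 2) = (i.castSucc : ℕ)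
        have := i.isLt
        rw [Nat.mod_eq_of_lt (by omega), Fin.coe_castSucc])
    · exact Fin.ext (by
        show ((i : ℕ) + 1) % (2 * n + 2) = (i.succ : ℕ)
        have := i.isLt
        rw [Nat.mod_eq_of_lt (by omega), Fin.val_succ])
  have hinj : Function.Injective (PartB.psi hn) := by
    intro x y h
    apply (CoxA.pi_bijective (2 * n + 1)).1
    have hx := DFunLike.congr_fun hcomp x
    have hy := DFunLike.congr_fun hcomp y
    rw [MonoidHom.comp_apply] at hx hy
    rw [← hx, ← hy, h]
  exact ⟨((MulEquiv.ofBijective _ ⟨hinj, PartB.psi_surj hn⟩).symm.trans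
    (MulEquiv.ofBijective _ (CoxA.pi_bijective (2 * n + 1))))⟩
end

section
/- For every natural number n ≥ 1, the following holds in ℚ: (1/3) · ( ((2n+2)!/4)·(6n − 4)² − 2·(2n+2)!·((6n+2)²/2 − 3(6n+2)/2 + 3 − (3/4)·(18n² − 22n + 8) − (4/3)·(18n − 6)) ) = (1/3)·(2n+2)!·(−3n − 4), and this quantity is strictly negative. -/
/-- Theorem 1.2 of the paper: the topological index
`τ(X_Gal) = (1/3)(C₁²(X_Gal) − 2C₂(X_Gal))` of the Galois cover of
`R_{n+1} ∪ R_{n+1}` equals `(1/3)(2n+2)!·(−3n−4)` and is strictly negative,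
where `C₁²(X_Gal) = (N!/4)(m−6)²` and
`C₂(X_Gal) = N!·(m²/2 − 3m/2 + 3 − (3/4)p − (4/3)q)` with `N = 2n+2`,
`m = 6n+2`, `p = 18n² − 22n + 8` and `q = 18n − 6`. -/
theorem stmt14 (n : ℕ) (hn : 1 ≤ n) :
    (1 / 3 : ℚ) *
        (((Nat.factorial (2 * n + 2) : ℚ) / 4) * (6 * (n : ℚ) - 4) ^ 2
          - 2 * (Nat.factorial (2 * n + 2) : ℚ) *
              ((6 * (n : ℚ) + 2) ^ 2 / 2 - 3 * (6 * (n : ℚ) + 2) / 2 + 3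
                - (3 / 4) * (18 * (n : ℚ) ^ 2 - 22 * (n : ℚ) + 8)
                - (4 / 3) * (18 * (n : ℚ) - 6)))
      = (1 / 3 : ℚ) * (Nat.factorial (2 * n + 2) : ℚ) * (-3 * (n : ℚ) - 4) ∧
    (1 / 3 : ℚ) *
        (((Nat.factorial (2 * n + 2) : ℚ) / 4) * (6 * (n : ℚ) - 4) ^ 2
          - 2 * (Nat.factorial (2 * n + 2) : ℚ) *
              ((6 * (n : ℚ) + 2) ^ 2 / 2 - 3 * (6 * (n : ℚ) + 2) / 2 + 3
                - (3 / 4) * (18 * (n : ℚ) ^ 2 - 22 * (n : ℚ) + 8)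
                - (4 / 3) * (18 * (n : ℚ) - 6))) < 0 := by
  have hfac : (0 : ℚ) < (Nat.factorial (2 * n + 2) : ℚ) := by
    exact_mod_cast Nat.factorial_pos _
  have hn' : (1 : ℚ) ≤ (n : ℚ) := by exact_mod_cast hn
  constructor
  · ring
  · have h : ((Nat.factorial (2 * n + 2) : ℚ) / 4) * (6 * (n : ℚ) - 4) ^ 2
          - 2 * (Nat.factorial (2 * n + 2) : ℚ) *
              ((6 * (n : ℚ) + 2) ^ 2 / 2 - 3 * (6 * (n : ℚ) + 2) / 2 + 3
                - (3 / 4) * (18 * (n : ℚ) ^ 2 - 22 * (n : ℚ) + 8)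
                - (4 / 3) * (18 * (n : ℚ) - 6))
        = (Nat.factorial (2 * n + 2) : ℚ) * (-3 * (n : ℚ) - 4) := by ring
    rw [h]
    have : (-3 * (n : ℚ) - 4) < 0 := by linarith
    have := mul_neg_of_pos_of_neg hfac this
    linarith
end
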